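/- arXiv:2509.09452 — 5 statements merged into one kernel-verified Lean document; each statement's English description precedes it below -/
import Mathlib

section
/- Suppose E = (E₋, ∞), let u be a positive solution of the HJB equation (1/2)b²u'' + ã u' + η u − u² − d (u')²/u = 0 on [y₀,∞) with C₁η ≤ u ≤ C₂η for some 0 < C₁ < C₂, and suppose Assumption (A) holds at y₀, that ã/η + (b²+2d)η'/η² converges to some nonzero constant K₁, that d/η converges to some nonzero constant K₂, and that η'/η → 0 as y → ∞. Then u'(y)/u(y) → 0 as y → ∞. -/
open Set Filter

/-- The operator `Ψ g = 1 + ((1/2) b² g'' + ã g') / g² - d (g')² / g³`, with derivatives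
taken within the set `S`. -/
noncomputable def PsiW (b atld d : ℝ → ℝ) (S : Set ℝ) (g : ℝ → ℝ) : ℝ → ℝ := fun y =>
  1 + ((1 / 2) * (b y) ^ 2 * derivWithin (derivWithin g S) S y
      + atld y * derivWithin g S y) / (g y) ^ 2
    - d y * (derivWithin g S y) ^ 2 / (g y) ^ 3

lemma sdt_max {f q : ℝ → ℝ} {m c : ℝ}
    (hfq : ∀ᶠ y in nhds m, HasDerivAt f (q y) y)
    (hq0 : q m = 0) (hqc : HasDerivAt q c m) (hmax : IsLocalMax f m) : c ≤ 0 := by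
  by_contra hc
  push_neg at hc
  have hslope := hasDerivAt_iff_tendsto_slope.mp hqc
  have h1 : ∀ᶠ y in nhdsWithin m (Ioi m), 0 < q y := by
    have h2 : ∀ᶠ y in nhdsWithin m {m}ᶜ, c / 2 < slope q m y :=
      hslope.eventually (eventually_gt_nhds (by linarith))
    have h3 : nhdsWithin m (Ioi m) ≤ nhdsWithin m {m}ᶜ :=
      nhdsWithin_mono _ (fun y hy => ne_of_gt hy)
    filter_upwards [h3 h2, self_mem_nhdsWithin] with y hy hy'
    have hy'' : (0:ℝ) < slope q m y := lt_trans (by linarith) hy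
    rw [slope_def_field, hq0, sub_zero] at hy''
    have hym : (0:ℝ) < y - m := sub_pos.mpr hy'
    have := mul_pos hy'' hym
    rwa [div_mul_cancel₀ _ (ne_of_gt hym)] at this
  have h4 : ∀ᶠ y in nhdsWithin m (Ioi m),
      0 < q y ∧ HasDerivAt f (q y) y ∧ f y ≤ f m := by
    filter_upwards [h1, (hfq.filter_mono nhdsWithin_le_nhds),
      (hmax.filter_mono nhdsWithin_le_nhds)] with y a b cc
    exact ⟨a, b, cc⟩
  obtain ⟨t, ht, hsub⟩ := mem_nhdsGT_iff_exists_Ioo_subset.mp h4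
  set t' := (m + t) / 2 with ht'
  have htm : m < t := ht
  have ht'1 : m < t' := by simp only [ht']; linarith
  have ht'2 : t' < t := by simp only [ht']; linarith
  have hmono : StrictMonoOn f (Icc m t') := by
    apply strictMonoOn_of_deriv_pos (convex_Icc m t')
    · intro x hx
      rcases eq_or_lt_of_le hx.1 with h | h
      · subst h
        exact hfq.self_of_nhds.continuousAt.continuousWithinAt
      · exact ((hsub ⟨h, lt_of_le_of_lt hx.2 ht'2⟩).2.1.continuousAt).continuousWithinAt
    · intro x hx
      rw [interior_Icc] at hx
      have hx' : x ∈ Ioo m t := ⟨hx.1, lt_trans hx.2 ht'2⟩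
      rw [(hsub hx').2.1.deriv]
      exact (hsub hx').1
  have hlt : f m < f t' := hmono (left_mem_Icc.mpr (le_of_lt ht'1))
    (right_mem_Icc.mpr (le_of_lt ht'1)) ht'1
  have hle : f t' ≤ f m := (hsub ⟨ht'1, ht'2⟩).2.2
  linarith

lemma sdt_min {f q : ℝ → ℝ} {m c : ℝ}
    (hfq : ∀ᶠ y in nhds m, HasDerivAt f (q y) y)
    (hq0 : q m = 0) (hqc : HasDerivAt q c m) (hmin : IsLocalMin f m) : 0 ≤ c := by
  have := sdt_max (f := fun y => -f y) (q := fun y => -q y) (c := -c)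
    (by filter_upwards [hfq] with y h using h.neg) (by simp [hq0]) hqc.neg hmin.neg
  linarith

lemma conv_of_extrema {f : ℝ → ℝ} {Y₀ C₁ C₂ : ℝ}
    (hcont : ∀ y, Y₀ < y → ContinuousAt f y)
    (hb : ∀ᶠ y in atTop, C₁ ≤ f y ∧ f y ≤ C₂)
    (hext : ∀ θ : ℝ, 0 < θ → ∃ Y, ∀ m, Y < m →
      ((IsLocalMax f m → f m ≤ 1 + θ) ∧ (IsLocalMin f m → 1 - θ ≤ f m))) :
    ∃ L, Tendsto f atTop (nhds L) := by
  have hb1 : IsBoundedUnder (· ≤ ·) atTop f :=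
    isBoundedUnder_of_eventually_le (hb.mono fun y h => h.2)
  have hb2 : IsBoundedUnder (· ≥ ·) atTop f :=
    isBoundedUnder_of_eventually_ge (hb.mono fun y h => h.1)
  have key : ∀ a b' : ℝ, a < b' → (∃ᶠ y in atTop, f y < a) → (∃ᶠ y in atTop, b' < f y) →
      ∀ Y : ℝ, ∃ m, Y < m ∧ IsLocalMax f m ∧ b' < f m := by
    intro a b' hab hfa hfb Y
    set Y' := max Y Y₀ + 1 with hY'
    have hY'Y : Y < Y' := by simp only [hY']; have := le_max_left Y Y₀; linarith
    have hY'Y₀ : Y₀ < Y' := by simp only [hY']; have := le_max_right Y Y₀; linarith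
    obtain ⟨t₁, ht₁Y, ht₁⟩ := frequently_atTop.mp hfa Y'
    obtain ⟨t₂, ht₂Y, ht₂⟩ := frequently_atTop.mp hfb (t₁ + 1)
    obtain ⟨t₃, ht₃Y, ht₃⟩ := frequently_atTop.mp hfa (t₂ + 1)
    have h12 : t₁ < t₂ := by linarith
    have h23 : t₂ < t₃ := by linarith
    have hcf : ContinuousOn f (Icc t₁ t₃) := fun x hx =>
      (hcont x (lt_of_lt_of_le (lt_of_lt_of_le hY'Y₀ ht₁Y) hx.1)).continuousWithinAt
    obtain ⟨m, hmI, hmmax⟩ := isCompact_Icc.exists_isMaxOn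
      ⟨t₂, ⟨le_of_lt h12, le_of_lt h23⟩⟩ hcf
    have hfm : b' < f m := lt_of_lt_of_le ht₂ (hmmax ⟨le_of_lt h12, le_of_lt h23⟩)
    have hm1 : t₁ < m := by
      rcases eq_or_lt_of_le hmI.1 with h | h
      · exfalso; rw [← h] at hfm; linarith
      · exact h
    have hm3 : m < t₃ := by
      rcases eq_or_lt_of_le hmI.2 with h | h
      · exfalso; rw [h] at hfm; linarith
      · exact h
    exact ⟨m, by linarith, hmmax.isLocalMax (Icc_mem_nhds hm1 hm3), hfm⟩
  have keymin : ∀ a b' : ℝ, a < b' → (∃ᶠ y in atTop, f y < a) → (∃ᶠ y in atTop, b' < f y) →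
      ∀ Y : ℝ, ∃ m, Y < m ∧ IsLocalMin f m ∧ f m < a := by
    intro a b' hab hfa hfb Y
    set Y' := max Y Y₀ + 1 with hY'
    have hY'Y : Y < Y' := by simp only [hY']; have := le_max_left Y Y₀; linarith
    have hY'Y₀ : Y₀ < Y' := by simp only [hY']; have := le_max_right Y Y₀; linarith
    obtain ⟨t₁, ht₁Y, ht₁⟩ := frequently_atTop.mp hfb Y'
    obtain ⟨t₂, ht₂Y, ht₂⟩ := frequently_atTop.mp hfa (t₁ + 1)
    obtain ⟨t₃, ht₃Y, ht₃⟩ := frequently_atTop.mp hfb (t₂ + 1)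
    have h12 : t₁ < t₂ := by linarith
    have h23 : t₂ < t₃ := by linarith
    have hcf : ContinuousOn f (Icc t₁ t₃) := fun x hx =>
      (hcont x (lt_of_lt_of_le (lt_of_lt_of_le hY'Y₀ ht₁Y) hx.1)).continuousWithinAt
    obtain ⟨m, hmI, hmmin⟩ := isCompact_Icc.exists_isMinOn
      ⟨t₂, ⟨le_of_lt h12, le_of_lt h23⟩⟩ hcf
    have hfm : f m < a := lt_of_le_of_lt (hmmin ⟨le_of_lt h12, le_of_lt h23⟩) ht₂
    have hm1 : t₁ < m := by
      rcases eq_or_lt_of_le hmI.1 with h | h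
      · exfalso; rw [← h] at hfm; linarith
      · exact h
    have hm3 : m < t₃ := by
      rcases eq_or_lt_of_le hmI.2 with h | h
      · exfalso; rw [h] at hfm; linarith
      · exact h
    exact ⟨m, by linarith, hmmin.isLocalMin (Icc_mem_nhds hm1 hm3), hfm⟩
  rcases lt_or_ge (liminf f atTop) (limsup f atTop) with hlt | hle
  · exfalso
    set p := liminf f atTop with hp
    set P := limsup f atTop with hP
    have hfreqlt : ∀ a : ℝ, p < a → ∃ᶠ y in atTop, f y < a := fun a ha =>
      frequently_lt_of_liminf_lt hb1.isCoboundedUnder_ge ha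
    have hfreqgt : ∀ b' : ℝ, b' < P → ∃ᶠ y in atTop, b' < f y := fun b' hb' =>
      frequently_lt_of_lt_limsup hb2.isCoboundedUnder_le hb'
    have hPle : P ≤ 1 := by
      by_contra h1P
      push_neg at h1P
      set b' := (max p 1 + P) / 2 with hb'
      have hmaxP : max p 1 < P := max_lt hlt h1P
      have hb'1 : 1 < b' := by
        have := le_max_right p 1; simp only [hb']; linarith
      have hb'P : b' < P := by simp only [hb']; linarith
      set a := (p + b') / 2 with ha
      have hpb' : p < b' := by
        have := le_max_left p 1; simp only [hb']; linarith
      have hpa : p < a := by simp only [ha]; linarith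
      have hab : a < b' := by simp only [ha]; linarith
      obtain ⟨Y, hY⟩ := hext (b' - 1) (by linarith)
      obtain ⟨m, hmY, hmmax, hmval⟩ := key a b' hab (hfreqlt a hpa) (hfreqgt b' hb'P) Y
      have := (hY m hmY).1 hmmax
      linarith
    have hple : 1 ≤ p := by
      by_contra hp1
      push_neg at hp1
      have hpm : p < min P 1 := lt_min hlt hp1
      set a := (p + min P 1) / 2 with ha
      set b' := (a + min P 1) / 2 with hb'
      have hpa : p < a := by simp only [ha]; linarith
      have ham : a < min P 1 := by simp only [ha]; linarith
      have hab : a < b' := by simp only [hb']; linarith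
      have hb'm : b' < min P 1 := by simp only [hb']; linarith
      have hb'P : b' < P := lt_of_lt_of_le hb'm (min_le_left _ _)
      have ha1 : a < 1 := lt_of_lt_of_le ham (min_le_right _ _)
      obtain ⟨Y, hY⟩ := hext (1 - a) (by linarith)
      obtain ⟨m, hmY, hmmin, hmval⟩ := keymin a b' hab (hfreqlt a hpa) (hfreqgt b' hb'P) Y
      have := (hY m hmY).2 hmmin
      linarith
    linarith
  · have heq : liminf f atTop = limsup f atTop :=
      le_antisymm (liminf_le_limsup hb1 hb2) hle
    exact ⟨limsup f atTop, tendsto_of_liminf_eq_limsup heq rfl hb1 hb2⟩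

lemma mono_aux {f g : ℝ → ℝ} {Y₀ : ℝ}
    (hfd : ∀ y, Y₀ ≤ y → HasDerivAt f (f y * g y) y)
    (t₁ t₂ c : ℝ) (h₁ : Y₀ ≤ t₁) (h₁₂ : t₁ ≤ t₂)
    (hc : ∀ x, x ∈ Ioo t₁ t₂ → c ≤ f x * g x) :
    c * (t₂ - t₁) ≤ f t₂ - f t₁ := by
  have hφ : ∀ x ∈ Icc t₁ t₂, HasDerivAt (fun z => f z - c * z) (f x * g x - c) x := by
    intro x hx
    have hid : HasDerivAt (fun z : ℝ => c * z) c x := by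
      simpa using (hasDerivAt_id x).const_mul c
    exact (hfd x (le_trans h₁ hx.1)).sub hid
  have hmono : MonotoneOn (fun z => f z - c * z) (Icc t₁ t₂) := by
    apply monotoneOn_of_deriv_nonneg (convex_Icc t₁ t₂)
    · exact fun x hx => (hφ x hx).continuousAt.continuousWithinAt
    · intro x hx
      rw [interior_Icc] at hx
      exact (hφ x ⟨le_of_lt hx.1, le_of_lt hx.2⟩).differentiableAt.differentiableWithinAt
    · intro x hx
      rw [interior_Icc] at hx
      rw [(hφ x ⟨le_of_lt hx.1, le_of_lt hx.2⟩).deriv]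
      have := hc x hx
      linarith
  have h9 : f t₁ - c * t₁ ≤ f t₂ - c * t₂ :=
    hmono (left_mem_Icc.mpr h₁₂) (right_mem_Icc.mpr h₁₂) h₁₂
  linarith

lemma mono_aux_g {g : ℝ → ℝ} {Y₀ K : ℝ}
    (hgd : ∀ y, Y₀ ≤ y → ∃ dd : ℝ, HasDerivAt g dd y ∧ |dd| ≤ K * (1 + (g y) ^ 2))
    (t₁ t₂ : ℝ) (h₁ : Y₀ ≤ t₁) (h₁₂ : t₁ ≤ t₂)
    (hgb : ∀ x, x ∈ Ioo t₁ t₂ → (g x) ^ 2 ≤ 1) :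
    g t₁ - g t₂ ≤ 2 * K * (t₂ - t₁) := by
  have hψ : ∀ x ∈ Icc t₁ t₂, ∃ dd : ℝ, HasDerivAt g dd x ∧ |dd| ≤ K * (1 + (g x) ^ 2) :=
    fun x hx => hgd x (le_trans h₁ hx.1)
  have hmono : MonotoneOn (fun z => g z + 2 * K * z) (Icc t₁ t₂) := by
    apply monotoneOn_of_deriv_nonneg (convex_Icc t₁ t₂)
    · intro x hx
      obtain ⟨dd, hdd, _⟩ := hψ x hx
      have hid : HasDerivAt (fun z : ℝ => 2 * K * z) (2 * K) x := by
        simpa using (hasDerivAt_id x).const_mul (2 * K)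
      exact (hdd.add hid).continuousAt.continuousWithinAt
    · intro x hx
      rw [interior_Icc] at hx
      obtain ⟨dd, hdd, _⟩ := hψ x ⟨le_of_lt hx.1, le_of_lt hx.2⟩
      have hid : HasDerivAt (fun z : ℝ => 2 * K * z) (2 * K) x := by
        simpa using (hasDerivAt_id x).const_mul (2 * K)
      exact (hdd.add hid).differentiableAt.differentiableWithinAt
    · intro x hx
      rw [interior_Icc] at hx
      obtain ⟨dd, hdd, hb⟩ := hψ x ⟨le_of_lt hx.1, le_of_lt hx.2⟩
      have hid : HasDerivAt (fun z : ℝ => 2 * K * z) (2 * K) x := by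
        simpa using (hasDerivAt_id x).const_mul (2 * K)
      have h1 : K * (1 + (g x) ^ 2) ≤ 2 * K := by
        have h2 := hgb x hx
        have hK : 0 ≤ K := by
          by_contra hK
          push_neg at hK
          have := abs_nonneg dd
          nlinarith [sq_nonneg (g x)]
        nlinarith
      have h8 := abs_le.mp hb
      have h7 : deriv (fun z => g z + 2 * K * z) x = dd + 2 * K := by
        exact (hdd.add hid).deriv
      rw [h7]
      linarith
  have h9 : g t₁ + 2 * K * t₁ ≤ g t₂ + 2 * K * t₂ :=
    hmono (left_mem_Icc.mpr h₁₂) (right_mem_Icc.mpr h₁₂) h₁₂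
  linarith

lemma osc_small {f g : ℝ → ℝ} {Y₀ c₁ c₂ K L : ℝ} (hc₁ : 0 < c₁) (hK : 0 < K)
    (hfd : ∀ y, Y₀ ≤ y → HasDerivAt f (f y * g y) y)
    (hgd : ∀ y, Y₀ ≤ y → ∃ dd : ℝ, HasDerivAt g dd y ∧ |dd| ≤ K * (1 + (g y) ^ 2))
    (hfb : ∀ y, Y₀ ≤ y → c₁ ≤ f y ∧ f y ≤ c₂)
    (hfL : Tendsto f atTop (nhds L)) {δ : ℝ} (hδ0 : 0 < δ) (hδ1 : δ ≤ 1) :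
    ∀ᶠ y in atTop, g y < δ := by
  have hc₂ : c₁ ≤ c₂ := by have := hfb Y₀ le_rfl; linarith
  have hε : (0:ℝ) < c₁ * δ ^ 2 / (64 * K) := by positivity
  obtain ⟨N, hN⟩ := (Metric.tendsto_atTop.mp hfL _ hε)
  rw [eventually_atTop]
  refine ⟨max N Y₀, fun y' hy' => ?_⟩
  by_contra hg
  push_neg at hg
  have hy'N : N ≤ y' := le_trans (le_max_left _ _) hy'
  have hy'Y₀ : Y₀ ≤ y' := le_trans (le_max_right _ _) hy'
  -- continuity of g on [Y₀, ∞)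
  have hgc : ∀ x, Y₀ ≤ x → ContinuousAt g x := fun x hx => (hgd x hx).choose_spec.1.continuousAt
  set S := {t | t ∈ Ici y' ∧ g t ≤ δ / 2} with hS
  by_cases hSne : S.Nonempty
  · have hSbdd : BddBelow S := ⟨y', fun t ht => ht.1⟩
    have hScl : IsClosed S := by
      have : S = Ici y' ∩ g ⁻¹' (Iic (δ / 2)) := by ext t; simp [hS, and_comm]
      rw [this]
      apply ContinuousOn.preimage_isClosed_of_isClosed _ isClosed_Ici isClosed_Iic
      exact fun x hx => (hgc x (le_trans hy'Y₀ hx)).continuousWithinAt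
    set te := sInf S with hte
    have hteS : te ∈ S := hScl.csInf_mem hSne hSbdd
    have htey' : y' ≤ te := hteS.1
    have hgte : g te ≤ δ / 2 := hteS.2
    have hlt : ∀ t, y' ≤ t → t < te → δ / 2 < g t := by
      intro t h1 h2
      by_contra h3
      push_neg at h3
      have : t ∈ S := ⟨h1, h3⟩
      have := csInf_le hSbdd this
      linarith
    have hy'te : y' < te := by
      rcases eq_or_lt_of_le htey' with h | h
      · exfalso; rw [← h] at hgte; linarith
      · exact h
    -- the set where g ≥ 3δ/4
    set S₂ := {t | t ∈ Icc y' te ∧ 3 * δ / 4 ≤ g t} with hS₂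
    have hS₂ne : S₂.Nonempty := ⟨y', ⟨⟨le_rfl, htey'⟩, by linarith⟩⟩
    have hS₂bdd : BddAbove S₂ := ⟨te, fun t ht => ht.1.2⟩
    have hS₂cl : IsClosed S₂ := by
      have : S₂ = Icc y' te ∩ g ⁻¹' (Ici (3 * δ / 4)) := by ext t; simp [hS₂, and_comm]
      rw [this]
      apply ContinuousOn.preimage_isClosed_of_isClosed _ isClosed_Icc isClosed_Ici
      exact fun x hx => (hgc x (le_trans hy'Y₀ hx.1)).continuousWithinAt
    set s := sSup S₂ with hs
    have hsS₂ : s ∈ S₂ := hS₂cl.csSup_mem hS₂ne hS₂bdd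
    have hsy' : y' ≤ s := hsS₂.1.1
    have hste : s ≤ te := hsS₂.1.2
    have hgs : 3 * δ / 4 ≤ g s := hsS₂.2
    have hslt : s < te := by
      rcases eq_or_lt_of_le hste with h | h
      · exfalso; rw [h] at hgs; linarith
      · exact h
    have hgtlt : ∀ t, s < t → t ≤ te → g t < 3 * δ / 4 := by
      intro t h1 h2
      by_contra h3
      push_neg at h3
      have : t ∈ S₂ := ⟨⟨le_trans hsy' (le_of_lt h1), h2⟩, h3⟩
      have := le_csSup hS₂bdd this
      linarith
    -- time bound: te - s ≥ δ/(8K)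
    have hgsq : ∀ x, x ∈ Ioo s te → (g x) ^ 2 ≤ 1 := by
      intro x hx
      have h1 := hlt x (le_trans hsy' (le_of_lt hx.1)) hx.2
      have h2 := hgtlt x hx.1 (le_of_lt hx.2)
      nlinarith
    have htime := mono_aux_g hgd s te (le_trans hy'Y₀ hsy') (le_of_lt hslt) hgsq
    have htime' : δ / (8 * K) ≤ te - s := by
      rw [div_le_iff₀ (by positivity)]
      nlinarith
    -- increase of f
    have hinc1 : 0 * (s - y') ≤ f s - f y' := by
      apply mono_aux hfd y' s 0 hy'Y₀ hsy'
      intro x hx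
      have h1 := hlt x (le_of_lt hx.1) (lt_of_lt_of_le hx.2 hste)
      have h2 := (hfb x (le_trans hy'Y₀ (le_of_lt hx.1))).1
      nlinarith
    have hinc2 : (c₁ * δ / 2) * (te - s) ≤ f te - f s := by
      apply mono_aux hfd s te (c₁ * δ / 2) (le_trans hy'Y₀ hsy') (le_of_lt hslt)
      intro x hx
      have h1 := hlt x (le_trans hsy' (le_of_lt hx.1)) hx.2
      have h2 := (hfb x (le_trans (le_trans hy'Y₀ hsy') (le_of_lt hx.1))).1
      nlinarith
    have hXpos : (0:ℝ) < c₁ * δ / 2 * (δ / (8 * K)) := by positivity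
    have hbig : c₁ * δ / 2 * (δ / (8 * K)) ≤ f te - f y' := by
      have h1 : (c₁ * δ / 2) * (δ / (8 * K)) ≤ (c₁ * δ / 2) * (te - s) :=
        mul_le_mul_of_nonneg_left htime' (by positivity)
      linarith
    have hd1 := hN te (le_trans hy'N htey')
    have hd2 := hN y' hy'N
    rw [Real.dist_eq] at hd1 hd2
    have h1 := abs_lt.mp hd1
    have h2 := abs_lt.mp hd2
    have heq : 2 * (c₁ * δ ^ 2 / (64 * K)) = c₁ * δ / 2 * (δ / (8 * K)) / 2 := by
      field_simp; ring
    linarith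
  · -- g stays above δ/2 forever : f grows without bound
    push_neg at hSne
    have hgt : ∀ t, y' ≤ t → δ / 2 < g t := by
      intro t ht
      by_contra h3
      push_neg at h3
      have : t ∈ S := ⟨ht, h3⟩
      rw [hSne] at this
      exact this
    set T := y' + (c₂ - c₁) * 4 / (c₁ * δ) + 1 with hT
    have hTy' : y' ≤ T := by
      have : (0:ℝ) ≤ (c₂ - c₁) * 4 / (c₁ * δ) := div_nonneg (by linarith) (by positivity)
      simp only [hT]; linarith
    have := mono_aux hfd y' T (c₁ * δ / 2) hy'Y₀ hTy' (by
      intro x hx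
      have h1 := hgt x (le_of_lt hx.1)
      have h2 := (hfb x (le_trans hy'Y₀ (le_of_lt hx.1))).1
      nlinarith)
    have hfT := (hfb T (le_trans hy'Y₀ hTy')).2
    have hfy' := (hfb y' hy'Y₀).1
    have hTbig : T - y' = (c₂ - c₁) * 4 / (c₁ * δ) + 1 := by simp only [hT]; ring
    rw [hTbig] at this
    have hpos : (0:ℝ) < c₁ * δ := by positivity
    have hexp : c₁ * δ / 2 * ((c₂ - c₁) * 4 / (c₁ * δ) + 1) = 2 * (c₂ - c₁) + c₁ * δ / 2 := by
      field_simp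
      ring
    rw [hexp] at this
    nlinarith

lemma tendsto_zero_of_fg {f g : ℝ → ℝ} {Y₀ c₁ c₂ K L : ℝ} (hc₁ : 0 < c₁) (hK : 0 < K)
    (hfd : ∀ y, Y₀ ≤ y → HasDerivAt f (f y * g y) y)
    (hgd : ∀ y, Y₀ ≤ y → ∃ dd : ℝ, HasDerivAt g dd y ∧ |dd| ≤ K * (1 + (g y) ^ 2))
    (hfb : ∀ y, Y₀ ≤ y → c₁ ≤ f y ∧ f y ≤ c₂)
    (hfL : Tendsto f atTop (nhds L)) :
    Tendsto g atTop (nhds 0) := by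
  have hc₂ : 0 < c₂ := lt_of_lt_of_le hc₁ (le_trans (hfb Y₀ le_rfl).1 (hfb Y₀ le_rfl).2)
  have hLpos : c₁ ≤ L :=
    ge_of_tendsto hfL (eventually_atTop.mpr ⟨Y₀, fun y hy => (hfb y hy).1⟩)
  have hLne : L ≠ 0 := by linarith
  -- apply osc_small to (f⁻¹, -g) as well
  have hfd' : ∀ y, Y₀ ≤ y → HasDerivAt (fun z => (f z)⁻¹) ((f y)⁻¹ * (-g y)) y := by
    intro y hy
    have hf0 : f y ≠ 0 := by have := (hfb y hy).1; linarith
    have := (hfd y hy).inv hf0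
    refine this.congr_deriv ?_
    field_simp
  have hgd' : ∀ y, Y₀ ≤ y → ∃ dd : ℝ, HasDerivAt (fun z => -g z) dd y ∧
      |dd| ≤ K * (1 + (-g y) ^ 2) := by
    intro y hy
    obtain ⟨dd, h1, h2⟩ := hgd y hy
    exact ⟨-dd, h1.neg, by rw [abs_neg]; convert h2 using 2; ring⟩
  have hfb' : ∀ y, Y₀ ≤ y → c₂⁻¹ ≤ (f y)⁻¹ ∧ (f y)⁻¹ ≤ c₁⁻¹ := by
    intro y hy
    obtain ⟨h1, h2⟩ := hfb y hy
    constructor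
    · apply inv_anti₀ (by linarith) h2
    · apply inv_anti₀ hc₁ h1
  have hfL' : Tendsto (fun z => (f z)⁻¹) atTop (nhds L⁻¹) := hfL.inv₀ hLne
  rw [Metric.tendsto_atTop]
  intro ε hε
  set δ := min ε 1 with hδ
  have hδ0 : 0 < δ := lt_min hε one_pos
  have hδ1 : δ ≤ 1 := min_le_right _ _
  have h1 := osc_small hc₁ hK hfd hgd hfb hfL hδ0 hδ1
  have h2 := osc_small (by positivity : (0:ℝ) < c₂⁻¹) hK hfd' hgd' hfb' hfL' hδ0 hδ1
  obtain ⟨N₁, hN₁⟩ := eventually_atTop.mp h1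
  obtain ⟨N₂, hN₂⟩ := eventually_atTop.mp h2
  refine ⟨max N₁ N₂, fun y hy => ?_⟩
  have ha := hN₁ y (le_trans (le_max_left _ _) hy)
  have hb := hN₂ y (le_trans (le_max_right _ _) hy)
  rw [Real.dist_eq, sub_zero]
  have : |g y| < δ := abs_lt.mpr ⟨by linarith, ha⟩
  exact lt_of_lt_of_le this (min_le_left _ _)

lemma aux_sq_le {h M : ℝ} (hh : |h| ≤ M) : h ^ 2 ≤ M ^ 2 := by
  nlinarith [sq_abs h, abs_nonneg h]

lemma aux_sum_sq {v h M : ℝ} (hh : |h| ≤ M) : (v + h) ^ 2 ≤ 2 * v ^ 2 + 2 * M ^ 2 := by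
  nlinarith [sq_nonneg (v - h), sq_abs h, abs_nonneg h]

lemma aux_num_bound {C₂ M cM v w : ℝ} (hM : 0 < M) (hcM : 0 < cM)
    (hw1 : |w| ≤ |v| + M) (hw2 : w ^ 2 ≤ 2 * v ^ 2 + 2 * M ^ 2) :
    (C₂ + 1) + M * |w| + cM * w ^ 2 ≤
      ((C₂ + 1) + M / 2 + M ^ 2 + 2 * cM * M ^ 2) + (M / 2 + 2 * cM) * v ^ 2 := by
  have hv : |v| ≤ (1 + v ^ 2) / 2 := by nlinarith [sq_nonneg (|v| - 1), sq_abs v]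
  nlinarith [mul_le_mul_of_nonneg_left hw1 hM.le, mul_le_mul_of_nonneg_left hw2 hcM.le,
    mul_le_mul_of_nonneg_left hv hM.le]

lemma aux_final_step {a₀ a₂ B₁ N M vsq : ℝ} (ha₀ : 0 < a₀) (ha₂ : 0 < a₂)
    (hB₁ : 0 < B₁) (hN : 0 < N) (hv : 0 ≤ vsq) :
    (a₀ + a₂ * vsq) / B₁ + (N + M ^ 2) ≤
      (a₀ / B₁ + N + M ^ 2 + a₂ / B₁) * (1 + vsq) := by
  have h1 : (a₀ + a₂ * vsq) / B₁ = a₀ / B₁ + (a₂ / B₁) * vsq := by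
    field_simp
  rw [h1]
  nlinarith [div_pos ha₀ hB₁, div_pos ha₂ hB₁, sq_nonneg M,
    mul_nonneg (div_pos ha₂ hB₁).le hv]

set_option maxHeartbeats 1600000 in
/-- under Assumption (A), if `ã/η + (b²+2d) η'/η²` and `d/η` converge to
nonzero constants and `η'/η → 0`, then the log-derivative of a solution `u` with
`C₁ η ≤ u ≤ C₂ η` satisfies `u'/u → 0` at `∞`. -/
theorem statement15
    (E : Set ℝ) (hE : E = Set.univ ∨ ∃ c : ℝ, E = Set.Ioi c)
    (R : ℝ) (hR : 0 < R) (hR1 : R ≠ 1)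
    (r lam sigma a b rho delta : ℝ → ℝ)
    (hrlip : LocallyLipschitzOn E r) (hlamlip : LocallyLipschitzOn E lam)
    (hsigmalip : LocallyLipschitzOn E sigma) (halip : LocallyLipschitzOn E a)
    (hblip : LocallyLipschitzOn E b) (hrholip : LocallyLipschitzOn E rho)
    (hdeltalip : LocallyLipschitzOn E delta)
    (hbne : ∀ y ∈ E, b y ≠ 0) (hsigmapos : ∀ y ∈ E, 0 < sigma y)
    (hrho : ∀ y ∈ E, rho y ∈ Icc (-1 : ℝ) 1)
    (η atld d : ℝ → ℝ)
    (hηdef : ∀ y, η y = (1 / R) * (delta y - (1 - R) * (r y + (lam y) ^ 2 / (2 * R))))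
    (hatlddef : ∀ y, atld y = a y + ((1 - R) / R) * rho y * lam y * b y)
    (hddef : ∀ y, d y = (1 / 2) * (b y) ^ 2 * ((1 - (rho y) ^ 2) * R + (rho y) ^ 2 + 1))
    (y₀ : ℝ) (hy₀ : y₀ ∈ E)
    (u : ℝ → ℝ) (huC2 : ContDiffOn ℝ 2 u (Ici y₀))
    (hupos : ∀ y ∈ Ici y₀, 0 < u y)
    (hHJB : ∀ y ∈ Ici y₀,
      (1 / 2) * (b y) ^ 2 * derivWithin (derivWithin u (Ici y₀)) (Ici y₀) y
        + atld y * derivWithin u (Ici y₀) y + η y * u y - (u y) ^ 2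
        - d y * (derivWithin u (Ici y₀) y) ^ 2 / u y = 0)
    (C₁ C₂ : ℝ) (hC₁ : 0 < C₁) (hC₁₂ : C₁ < C₂)
    (hbound : ∀ y ∈ Ici y₀, C₁ * η y ≤ u y ∧ u y ≤ C₂ * η y)
    (hA1pos : ∀ y ∈ Ici y₀, 0 < η y)
    (hA1C2 : ContDiffOn ℝ 2 η (Ici y₀))
    (hA2 : ∃ M : ℝ, ∀ y ∈ Ici y₀,
      |(b y) ^ 2 / η y| ≤ M ∧ |atld y / η y| ≤ M ∧
      |derivWithin η (Ici y₀) y / η y| ≤ M)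
    (hA3 : Filter.Tendsto (PsiW b atld d (Ici y₀) η) Filter.atTop (nhds 1))
    (K₁ K₂ : ℝ) (hK₁ : K₁ ≠ 0) (hK₂ : K₂ ≠ 0)
    (hrate₁ : Filter.Tendsto (fun y =>
      atld y / η y + ((b y) ^ 2 + 2 * d y) * derivWithin η (Ici y₀) y / (η y) ^ 2)
      Filter.atTop (nhds K₁))
    (hrate₂ : Filter.Tendsto (fun y => d y / η y) Filter.atTop (nhds K₂))
    (hη'η : Filter.Tendsto (fun y => derivWithin η (Ici y₀) y / η y)
      Filter.atTop (nhds 0)) :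
    Filter.Tendsto (fun y => derivWithin u (Ici y₀) y / u y) Filter.atTop (nhds 0) := by
  have hsubE : Ici y₀ ⊆ E := by
    rcases hE with h | ⟨c, h⟩
    · rw [h]; intro y _; exact mem_univ y
    · rw [h] at hy₀ ⊢; intro y hy; exact lt_of_lt_of_le hy₀ (mem_Ici.mp hy)
  set u' := derivWithin u (Ici y₀) with hu'def
  set u'' := derivWithin u' (Ici y₀) with hu''def
  set e' := derivWithin η (Ici y₀) with he'def
  set e'' := derivWithin e' (Ici y₀) with he''def
  have hup : ∀ y, y₀ ≤ y → 0 < u y := fun y hy => hupos y hy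
  have hηp : ∀ y, y₀ ≤ y → 0 < η y := fun y hy => hA1pos y hy
  have hbn : ∀ y, y₀ ≤ y → b y ≠ 0 := fun y hy => hbne y (hsubE hy)
  have hb2p : ∀ y, y₀ ≤ y → 0 < (b y) ^ 2 := by
    intro y hy
    have h := hbn y hy
    positivity
  have hC₂0 : (0:ℝ) < C₂ := lt_trans hC₁ hC₁₂
  -- basic differentiability transfers
  have hUd : DifferentiableOn ℝ u (Ici y₀) := huC2.differentiableOn (by norm_num)
  have hU'd : DifferentiableOn ℝ u' (Ici y₀) :=
    (huC2.derivWithin (m := 1) (uniqueDiffOn_Ici y₀) (by norm_num)).differentiableOn (by norm_num)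
  have hEd : DifferentiableOn ℝ η (Ici y₀) := hA1C2.differentiableOn (by norm_num)
  have hE'd : DifferentiableOn ℝ e' (Ici y₀) :=
    (hA1C2.derivWithin (m := 1) (uniqueDiffOn_Ici y₀) (by norm_num)).differentiableOn (by norm_num)
  have hD1 : ∀ (φ : ℝ → ℝ), DifferentiableOn ℝ φ (Ici y₀) → ∀ y, y₀ < y →
      HasDerivAt φ (derivWithin φ (Ici y₀) y) y := by
    intro φ hφ y hy
    have hmem : Ici y₀ ∈ nhds y := Ici_mem_nhds hy
    have h1 := (hφ y (le_of_lt hy)).differentiableAt hmem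
    rw [derivWithin_of_mem_nhds hmem]
    exact h1.hasDerivAt
  have hu1 : ∀ y, y₀ < y → HasDerivAt u (u' y) y := fun y hy => hD1 u hUd y hy
  have hu2 : ∀ y, y₀ < y → HasDerivAt u' (u'' y) y := fun y hy => hD1 u' hU'd y hy
  have he1 : ∀ y, y₀ < y → HasDerivAt η (e' y) y := fun y hy => hD1 η hEd y hy
  have he2 : ∀ y, y₀ < y → HasDerivAt e' (e'' y) y := fun y hy => hD1 e' hE'd y hy
  set F : ℝ → ℝ := fun y => u y / η y with hFdef
  set V : ℝ → ℝ := fun y => u' y / u y - e' y / η y with hVdef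
  have hFb : ∀ y, y₀ ≤ y → C₁ ≤ F y ∧ F y ≤ C₂ := by
    intro y hy
    have h1 := hbound y hy
    have h2 := hηp y hy
    constructor
    · show C₁ ≤ u y / η y
      rw [le_div_iff₀ h2]
      exact h1.1
    · show u y / η y ≤ C₂
      rw [div_le_iff₀ h2]
      exact h1.2
  have hF1 : ∀ y, y₀ < y → HasDerivAt F ((u' y * η y - u y * e' y) / (η y) ^ 2) y := by
    intro y hy
    exact (hu1 y hy).div (he1 y hy) (ne_of_gt (hηp y (le_of_lt hy)))
  have hFd : ∀ y, y₀ < y → HasDerivAt F (F y * V y) y := by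
    intro y hy
    have h1 := hF1 y hy
    have hu0 : u y ≠ 0 := ne_of_gt (hup y hy.le)
    have hη0 : η y ≠ 0 := ne_of_gt (hηp y hy.le)
    convert h1 using 1
    show (u y / η y) * (u' y / u y - e' y / η y) = _
    field_simp
  have hcontF : ∀ y, y₀ < y → ContinuousAt F y := fun y hy => (hF1 y hy).continuousAt
  -- solve the HJB for u''
  have hu''eq : ∀ y, y₀ ≤ y → u'' y =
      (2 * ((u y) ^ 2 + d y * (u' y) ^ 2 / u y - η y * u y - atld y * u' y)) / (b y) ^ 2 := by
    intro y hy
    have h1 := hHJB y hy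
    have hb0 : (b y) ^ 2 ≠ 0 := ne_of_gt (hb2p y hy)
    have hu0 : u y ≠ 0 := ne_of_gt (hup y hy)
    rw [eq_div_iff hb0]
    field_simp at h1 ⊢
    linarith
  -- PsiW identity
  have hPsiEq : ∀ y, y₀ ≤ y → PsiW b atld d (Ici y₀) η y - 1 =
      ((b y) ^ 2 / (2 * η y)) * (e'' y / η y) + (atld y / η y) * (e' y / η y)
        - (d y / η y) * (e' y / η y) ^ 2 := by
    intro y hy
    have hη0 : η y ≠ 0 := ne_of_gt (hηp y hy)
    simp only [PsiW, ← he'def, ← he''def]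
    field_simp
    ring
  have hPsiEv : ∀ θ : ℝ, 0 < θ → ∀ᶠ y in atTop, |PsiW b atld d (Ici y₀) η y - 1| ≤ θ := by
    intro θ hθ
    have h1 : Metric.closedBall (1:ℝ) θ ∈ nhds 1 := Metric.closedBall_mem_nhds _ hθ
    filter_upwards [hA3.eventually (eventually_of_mem h1 (fun x hx => hx))] with y hy
    rw [Metric.mem_closedBall, Real.dist_eq] at hy
    exact hy
  -- the local extrema principle
  have hext : ∀ θ : ℝ, 0 < θ → ∃ Y, ∀ m, Y < m →
      ((IsLocalMax F m → F m ≤ 1 + θ) ∧ (IsLocalMin F m → 1 - θ ≤ F m)) := by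
    intro θ hθ
    obtain ⟨Y', hY'⟩ := eventually_atTop.mp (hPsiEv θ hθ)
    refine ⟨max Y' y₀, fun m hm => ?_⟩
    have hm0 : y₀ < m := lt_of_le_of_lt (le_max_right _ _) hm
    have hmY : Y' ≤ m := le_of_lt (lt_of_le_of_lt (le_max_left _ _) hm)
    have hΨ := abs_le.mp (hY' m hmY)
    have hη0 : η m ≠ 0 := ne_of_gt (hηp m hm0.le)
    have hu0 : u m ≠ 0 := ne_of_gt (hup m hm0.le)
    have hb0 : b m ≠ 0 := hbn m hm0.le
    have hBpos : 0 < (b m) ^ 2 / (2 * η m) := by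
      have h1 := hb2p m hm0.le
      have h2 := hηp m hm0.le
      positivity
    have hF0 : 0 < F m := lt_of_lt_of_le hC₁ (hFb m hm0.le).1
    have hden0 : ((η m) ^ 2 : ℝ) ≠ 0 := pow_ne_zero 2 hη0
    have hNum : HasDerivAt (fun z => u' z * η z - u z * e' z)
        (u'' m * η m + u' m * e' m - (u' m * e' m + u m * e'' m)) m :=
      ((hu2 m hm0).mul (he1 m hm0)).sub ((hu1 m hm0).mul (he2 m hm0))
    have hDen : HasDerivAt (fun z => (η z) ^ 2) ((2:ℕ) * (η m) ^ 1 * e' m) m :=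
      (he1 m hm0).pow 2
    have hq : ∀ᶠ y in nhds m, HasDerivAt F ((u' y * η y - u y * e' y) / (η y) ^ 2) y := by
      filter_upwards [Ioi_mem_nhds hm0] with y hy
      exact hF1 y hy
    have hsetup : u' m * η m = u m * e' m →
        HasDerivAt (fun z => (u' z * η z - u z * e' z) / (η z) ^ 2)
          (((F m) ^ 2 - PsiW b atld d (Ici y₀) η m * F m) / ((b m) ^ 2 / (2 * η m))) m := by
      intro hcrit
      have h0 := hNum.div hDen hden0
      have hu'm : u' m = u m * e' m / η m := by
        rw [eq_div_iff hη0]; linarith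
      refine h0.congr_deriv ?_
      simp only [PsiW, ← he'def, ← he''def, hFdef]
      rw [hu''eq m hm0.le, hu'm]
      push_cast
      field_simp
      ring
    constructor
    · intro hmax
      have hcrit : u' m * η m = u m * e' m := by
        have h1 := (hF1 m hm0).deriv
        have h2 := hmax.deriv_eq_zero
        rw [h1] at h2
        rcases div_eq_zero_iff.mp h2 with h3 | h3
        · linarith
        · exact absurd h3 hden0
      have hc := sdt_max hq (by rw [hcrit]; ring) (hsetup hcrit) hmax
      rcases div_nonpos_iff.mp hc with ⟨h3, h4⟩ | ⟨h3, h4⟩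
      · linarith
      · nlinarith [hΨ.2, hF0]
    · intro hmin
      have hcrit : u' m * η m = u m * e' m := by
        have h1 := (hF1 m hm0).deriv
        have h2 := hmin.deriv_eq_zero
        rw [h1] at h2
        rcases div_eq_zero_iff.mp h2 with h3 | h3
        · linarith
        · exact absurd h3 hden0
      have hc := sdt_min hq (by rw [hcrit]; ring) (hsetup hcrit) hmin
      rcases div_nonneg_iff.mp hc with ⟨h3, h4⟩ | ⟨h3, h4⟩
      · nlinarith [hΨ.1, hF0]
      · linarith
  -- convergence of F
  obtain ⟨L, hFL⟩ := conv_of_extrema hcontF (eventually_atTop.mpr ⟨y₀, hFb⟩) hext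
  -- constants
  obtain ⟨M₀, hM₀⟩ := hA2
  set M := max M₀ 1 with hMdef
  have hM1 : (1:ℝ) ≤ M := le_max_right _ _
  have hM0 : (0:ℝ) < M := lt_of_lt_of_le one_pos hM1
  have hMb : ∀ y, y₀ ≤ y → |(b y) ^ 2 / η y| ≤ M ∧ |atld y / η y| ≤ M ∧ |e' y / η y| ≤ M := by
    intro y hy
    obtain ⟨h1, h2, h3⟩ := hM₀ y hy
    exact ⟨h1.trans (le_max_left _ _), h2.trans (le_max_left _ _), h3.trans (le_max_left _ _)⟩
  set cx := max 2 (R + 1) with hcxdef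
  have hcx0 : (0:ℝ) < cx := lt_of_lt_of_le two_pos (le_max_left _ _)
  have hcc : ∀ y, y₀ ≤ y → 1 ≤ (1 - (rho y) ^ 2) * R + (rho y) ^ 2 + 1 ∧
      (1 - (rho y) ^ 2) * R + (rho y) ^ 2 + 1 ≤ cx := by
    intro y hy
    obtain ⟨hρ1, hρ2⟩ := hrho y (hsubE hy)
    have hρsq : (rho y) ^ 2 ≤ 1 := by nlinarith [hρ1, hρ2]
    have hx1 : (0:ℝ) ≤ (1 - (rho y) ^ 2) * R :=
      mul_nonneg (by linarith) hR.le
    refine ⟨by nlinarith [sq_nonneg (rho y)], ?_⟩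
    rcases le_total R 1 with h | h
    · refine le_trans ?_ (le_max_left _ _)
      nlinarith [mul_nonneg (show (0:ℝ) ≤ 1 - (rho y) ^ 2 by linarith)
        (show (0:ℝ) ≤ 1 - R by linarith), sq_nonneg (rho y)]
    · refine le_trans ?_ (le_max_right _ _)
      nlinarith [mul_nonneg (show (0:ℝ) ≤ 1 - (rho y) ^ 2 by linarith)
        (show (0:ℝ) ≤ R - 1 by linarith), sq_nonneg (rho y)]
  have hDid : ∀ y, y₀ ≤ y → d y / η y =
      ((b y) ^ 2 / (2 * η y)) * ((1 - (rho y) ^ 2) * R + (rho y) ^ 2 + 1) := by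
    intro y hy
    rw [hddef y]
    have hη0 : η y ≠ 0 := ne_of_gt (hηp y hy)
    field_simp
  have hBpos' : ∀ y, y₀ ≤ y → 0 < (b y) ^ 2 / (2 * η y) := by
    intro y hy
    have h1 := hb2p y hy
    have h2 := hηp y hy
    positivity
  have hDpos : ∀ y, y₀ ≤ y → 0 < d y / η y := by
    intro y hy
    rw [hDid y hy]
    have h3 := (hcc y hy).1
    have hB := hBpos' y hy
    exact mul_pos hB (by linarith)
  have hK₂pos : 0 < K₂ := by
    have h0 : 0 ≤ K₂ := ge_of_tendsto hrate₂
      (eventually_atTop.mpr ⟨y₀, fun y hy => (hDpos y hy).le⟩)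
    exact lt_of_le_of_ne h0 (Ne.symm hK₂)
  set B₁ := K₂ / (2 * cx) with hB₁def
  have hB₁pos : 0 < B₁ := div_pos hK₂pos (by positivity)
  obtain ⟨ya, hya⟩ := eventually_atTop.mp
    (hrate₂.eventually (eventually_ge_nhds (show K₂ / 2 < K₂ by linarith)))
  obtain ⟨yb, hyb⟩ := eventually_atTop.mp (hPsiEv 1 one_pos)
  set y₁ := max (max ya yb) (y₀ + 1) with hy₁def
  have hy₁0 : y₀ < y₁ := lt_of_lt_of_le (by linarith) (le_max_right _ _)
  have hy₁a : ya ≤ y₁ := le_trans (le_max_left _ _) (le_max_left _ _)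
  have hy₁b : yb ≤ y₁ := le_trans (le_max_right _ _) (le_max_left _ _)
  have hBlow : ∀ y, y₁ ≤ y → B₁ ≤ (b y) ^ 2 / (2 * η y) := by
    intro y hy
    have hy0 : y₀ ≤ y := le_trans hy₁0.le hy
    have h1 := hya y (le_trans hy₁a hy)
    rw [hDid y hy0] at h1
    have h2 := hcc y hy0
    have hBp := hBpos' y hy0
    rw [hB₁def, div_le_iff₀ (by positivity)]
    nlinarith [mul_le_mul_of_nonneg_left h2.2 hBp.le]
  have hBup : ∀ y, y₀ ≤ y → (b y) ^ 2 / (2 * η y) ≤ M / 2 := by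
    intro y hy
    have h2 := le_of_abs_le (hMb y hy).1
    have h3 : (b y) ^ 2 / (2 * η y) = ((b y) ^ 2 / η y) / 2 := by ring
    linarith [h3]
  have hDup : ∀ y, y₀ ≤ y → d y / η y ≤ M * cx / 2 := by
    intro y hy
    rw [hDid y hy]
    have h1 := hBup y hy
    have h2 := hcc y hy
    have hBp := hBpos' y hy
    calc (b y) ^ 2 / (2 * η y) * ((1 - (rho y) ^ 2) * R + (rho y) ^ 2 + 1)
        ≤ (b y) ^ 2 / (2 * η y) * cx := mul_le_mul_of_nonneg_left h2.2 hBp.le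
      _ ≤ M / 2 * cx := mul_le_mul_of_nonneg_right h1 hcx0.le
      _ = M * cx / 2 := by ring
  set N := (1 + M ^ 2 + (M * cx / 2) * M ^ 2) / B₁ with hNdef
  have hNpos : 0 < N := by
    apply div_pos _ hB₁pos
    nlinarith [sq_nonneg M, mul_nonneg (mul_nonneg hM0.le hcx0.le) (sq_nonneg M)]
  have hTb : ∀ y, y₁ ≤ y → |e'' y / η y| ≤ N := by
    intro y hy
    have hy0 : y₀ ≤ y := le_trans hy₁0.le hy
    have hψ := hyb y (le_trans hy₁b hy)
    have hid := hPsiEq y hy0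
    have hA := (hMb y hy0).2.1
    have hH := (hMb y hy0).2.2
    have hDu := hDup y hy0
    have hD0 := (hDpos y hy0).le
    have hBl := hBlow y hy
    have hBp : 0 < (b y) ^ 2 / (2 * η y) := hBpos' y hy0
    have h2 : ((b y) ^ 2 / (2 * η y)) * (e'' y / η y) =
        (PsiW b atld d (Ici y₀) η y - 1) - (atld y / η y) * (e' y / η y)
          + (d y / η y) * (e' y / η y) ^ 2 := by
      rw [hid]; ring
    have hHsq : (e' y / η y) ^ 2 ≤ M ^ 2 := by
      nlinarith [hH, abs_nonneg (e' y / η y), sq_abs (e' y / η y)]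
    have h3 : |(atld y / η y) * (e' y / η y)| ≤ M ^ 2 := by
      rw [abs_mul]
      have := abs_nonneg (atld y / η y)
      nlinarith [abs_nonneg (e' y / η y)]
    have h4 : |(d y / η y) * (e' y / η y) ^ 2| ≤ (M * cx / 2) * M ^ 2 := by
      rw [abs_mul, abs_of_nonneg hD0, abs_of_nonneg (sq_nonneg _)]
      have h5 : 0 ≤ (e' y / η y) ^ 2 := sq_nonneg _
      nlinarith
    have h1 : |((b y) ^ 2 / (2 * η y)) * (e'' y / η y)| ≤ 1 + M ^ 2 + (M * cx / 2) * M ^ 2 := by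
      rw [h2]
      calc |(PsiW b atld d (Ici y₀) η y - 1) - (atld y / η y) * (e' y / η y)
            + (d y / η y) * (e' y / η y) ^ 2|
          ≤ |(PsiW b atld d (Ici y₀) η y - 1) - (atld y / η y) * (e' y / η y)|
            + |(d y / η y) * (e' y / η y) ^ 2| := abs_add_le _ _
        _ ≤ |PsiW b atld d (Ici y₀) η y - 1| + |(atld y / η y) * (e' y / η y)|
            + |(d y / η y) * (e' y / η y) ^ 2| := by
              have := abs_sub (PsiW b atld d (Ici y₀) η y - 1) ((atld y / η y) * (e' y / η y))
              linarith
        _ ≤ 1 + M ^ 2 + (M * cx / 2) * M ^ 2 := by linarith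
    have h5 : |e'' y / η y| = |((b y) ^ 2 / (2 * η y)) * (e'' y / η y)| / ((b y) ^ 2 / (2 * η y)) := by
      rw [abs_mul, abs_of_pos hBp, mul_div_cancel_left₀ _ (ne_of_gt hBp)]
    rw [h5, hNdef]
    exact div_le_div₀
      (by nlinarith [sq_nonneg M, mul_nonneg (mul_nonneg hM0.le hcx0.le) (sq_nonneg M)])
      h1 hB₁pos hBl
  -- derivative of u'/u via the HJB equation
  have hWd : ∀ y, y₀ < y → HasDerivAt (fun z => u' z / u z)
      ((F y - 1 - (atld y / η y) * (u' y / u y)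
        + (d y / η y - (b y) ^ 2 / (2 * η y)) * (u' y / u y) ^ 2) / ((b y) ^ 2 / (2 * η y))) y := by
    intro y hy
    have h1 := (hu2 y hy).div (hu1 y hy) (ne_of_gt (hup y hy.le))
    have hu0 : u y ≠ 0 := ne_of_gt (hup y hy.le)
    have hη0 : η y ≠ 0 := ne_of_gt (hηp y hy.le)
    have hb0 : b y ≠ 0 := hbn y hy.le
    refine h1.congr_deriv ?_
    simp only [hFdef]
    rw [hu''eq y hy.le]
    field_simp
    ring
  have hHdd : ∀ y, y₀ < y → HasDerivAt (fun z => e' z / η z)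
      ((e'' y * η y - e' y * e' y) / (η y) ^ 2) y := by
    intro y hy
    exact (he2 y hy).div (he1 y hy) (ne_of_gt (hηp y hy.le))
  -- the bound constant
  have hMsq : (0:ℝ) < M ^ 2 := by
    have h8 : (1:ℝ) * 1 ≤ M * M := mul_le_mul hM1 hM1 one_pos.le (by linarith)
    have h9 : M * M = M ^ 2 := by ring
    linarith
  obtain ⟨cM, hcMdef⟩ : ∃ x : ℝ, x = M * cx / 2 + M / 2 := ⟨_, rfl⟩
  have hcM0 : 0 < cM := by
    rw [hcMdef]
    have h8 := mul_pos hM0 hcx0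
    linarith
  obtain ⟨a₀, ha₀def⟩ : ∃ x : ℝ, x = (C₂ + 1) + M / 2 + M ^ 2 + 2 * cM * M ^ 2 := ⟨_, rfl⟩
  obtain ⟨a₂, ha₂def⟩ : ∃ x : ℝ, x = M / 2 + 2 * cM := ⟨_, rfl⟩
  have ha₀0 : 0 < a₀ := by
    rw [ha₀def]
    have h8 := mul_pos (mul_pos two_pos hcM0) hMsq
    linarith [hC₂0, hM0, hMsq]
  have ha₂0 : 0 < a₂ := by
    rw [ha₂def]
    linarith [hM0, hcM0]
  obtain ⟨K, hKdef⟩ : ∃ x : ℝ, x = a₀ / B₁ + N + M ^ 2 + a₂ / B₁ := ⟨_, rfl⟩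
  have hKpos : 0 < K := by
    rw [hKdef]
    have h1 : 0 < a₀ / B₁ := div_pos ha₀0 hB₁pos
    have h2 : 0 < a₂ / B₁ := div_pos ha₂0 hB₁pos
    linarith
  -- package the derivative bound for V
  have hgd : ∀ y, y₁ ≤ y → ∃ dd : ℝ, HasDerivAt V dd y ∧ |dd| ≤ K * (1 + (V y) ^ 2) := by
    intro y hy
    have hy0 : y₀ ≤ y := le_trans hy₁0.le hy
    have hy0' : y₀ < y := lt_of_lt_of_le hy₁0 hy
    refine ⟨_, (hWd y hy0').sub (hHdd y hy0'), ?_⟩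
    have hu0 : u y ≠ 0 := ne_of_gt (hup y hy0)
    have hη0 : η y ≠ 0 := ne_of_gt (hηp y hy0)
    have hBp := hBpos' y hy0
    have hBl := hBlow y hy
    have hA := (hMb y hy0).2.1
    have hH := (hMb y hy0).2.2
    have hDu := hDup y hy0
    have hD0 := (hDpos y hy0).le
    have hBu := hBup y hy0
    have hFbd := hFb y hy0
    -- notation
    set W := u' y / u y with hWdef
    set Hh := e' y / η y with hHhdef
    have hWV : W = V y + Hh := by
      simp only [hVdef]
      ring
    have habsH : |Hh| ≤ M := hH
    have hWabs : |W| ≤ |V y| + M := by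
      rw [hWV]
      calc |V y + Hh| ≤ |V y| + |Hh| := abs_add_le _ _
        _ ≤ |V y| + M := by linarith
    have hWsq : W ^ 2 ≤ 2 * (V y) ^ 2 + 2 * M ^ 2 := by
      rw [hWV]
      exact aux_sum_sq habsH
    -- numerator bound
    have hnum : |F y - 1 - (atld y / η y) * W + (d y / η y - (b y) ^ 2 / (2 * η y)) * W ^ 2|
        ≤ (C₂ + 1) + M * |W| + cM * W ^ 2 := by
      have h1 : |F y - 1| ≤ C₂ + 1 := by
        rw [abs_le]
        exact ⟨by linarith [hFbd.1], by linarith [hFbd.2]⟩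
      have h2 : |(atld y / η y) * W| ≤ M * |W| := by
        rw [abs_mul]
        exact mul_le_mul_of_nonneg_right hA (abs_nonneg _)
      have h3 : |(d y / η y - (b y) ^ 2 / (2 * η y)) * W ^ 2| ≤ cM * W ^ 2 := by
        rw [abs_mul, abs_of_nonneg (sq_nonneg W)]
        apply mul_le_mul_of_nonneg_right _ (sq_nonneg W)
        rw [abs_le, hcMdef]
        constructor
        · have := mul_pos hM0 hcx0
          linarith
        · have h9 : 0 < M * cx := mul_pos hM0 hcx0
          linarith
      calc |F y - 1 - (atld y / η y) * W + (d y / η y - (b y) ^ 2 / (2 * η y)) * W ^ 2|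
          ≤ |F y - 1 - (atld y / η y) * W| + |(d y / η y - (b y) ^ 2 / (2 * η y)) * W ^ 2| :=
            abs_add_le _ _
        _ ≤ |F y - 1| + |(atld y / η y) * W| + |(d y / η y - (b y) ^ 2 / (2 * η y)) * W ^ 2| := by
            have := abs_sub (F y - 1) ((atld y / η y) * W)
            linarith
        _ ≤ (C₂ + 1) + M * |W| + cM * W ^ 2 := by linarith
    have hWDb : |(F y - 1 - (atld y / η y) * W
        + (d y / η y - (b y) ^ 2 / (2 * η y)) * W ^ 2) / ((b y) ^ 2 / (2 * η y))|
        ≤ ((C₂ + 1) + M * |W| + cM * W ^ 2) / B₁ := by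
      rw [abs_div, abs_of_pos hBp]
      apply div_le_div₀ _ hnum hB₁pos hBl
      positivity
    have hHDid : (e'' y * η y - e' y * e' y) / (η y) ^ 2 = e'' y / η y - Hh ^ 2 := by
      rw [hHhdef]
      field_simp
    have hHDb : |(e'' y * η y - e' y * e' y) / (η y) ^ 2| ≤ N + M ^ 2 := by
      rw [hHDid]
      have h1 := hTb y hy
      have h2 : Hh ^ 2 ≤ M ^ 2 := aux_sq_le habsH
      calc |e'' y / η y - Hh ^ 2| ≤ |e'' y / η y| + |Hh ^ 2| := abs_sub _ _
        _ ≤ N + M ^ 2 := by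
            rw [abs_of_nonneg (sq_nonneg Hh)] at *
            linarith
    calc |(F y - 1 - (atld y / η y) * W + (d y / η y - (b y) ^ 2 / (2 * η y)) * W ^ 2)
            / ((b y) ^ 2 / (2 * η y)) - (e'' y * η y - e' y * e' y) / (η y) ^ 2|
        ≤ ((C₂ + 1) + M * |W| + cM * W ^ 2) / B₁ + (N + M ^ 2) := by
          have := abs_sub ((F y - 1 - (atld y / η y) * W
            + (d y / η y - (b y) ^ 2 / (2 * η y)) * W ^ 2) / ((b y) ^ 2 / (2 * η y)))
            ((e'' y * η y - e' y * e' y) / (η y) ^ 2)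
          linarith
      _ ≤ (a₀ + a₂ * (V y) ^ 2) / B₁ + (N + M ^ 2) := by
          apply add_le_add_left
          rw [div_le_div_iff_of_pos_right hB₁pos, ha₀def, ha₂def]
          exact aux_num_bound hM0 hcM0 hWabs hWsq
      _ ≤ K * (1 + (V y) ^ 2) := by
          rw [hKdef]
          exact aux_final_step ha₀0 ha₂0 hB₁pos hNpos (sq_nonneg (V y))
  have hfd' : ∀ y, y₁ ≤ y → HasDerivAt F (F y * V y) y :=
    fun y hy => hFd y (lt_of_lt_of_le hy₁0 hy)
  have hfb' : ∀ y, y₁ ≤ y → C₁ ≤ F y ∧ F y ≤ C₂ := fun y hy => hFb y (le_trans hy₁0.le hy)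
  have hV0 : Tendsto V atTop (nhds 0) := tendsto_zero_of_fg hC₁ hKpos hfd' hgd hfb' hFL
  have hgoal : (fun y => u' y / u y) = fun y => V y + e' y / η y := by
    funext y
    simp only [hVdef]
    ring
  rw [hgoal]
  have hfin := hV0.add hη'η
  simpa using hfin
end

section
/- Suppose E = (E₋, ∞) and let u be a positive solution of the HJB equation (1/2)b²u'' + ã u' + η u − u² − d (u')²/u = 0 on [y₀,∞) with u(y)/η(y) → 1 as y → ∞. Assume ā := ã/η + (b²−2d)η'/η² ≤ 0, η > 0 and Ψη ≤ 1 on [y₀,∞). Then either u(y) > η(y) for all sufficiently large y, or u(y) ≤ η(y) for all sufficiently large y. If additionally ã/b² ≤ −C on [y₀,∞) for some constant C > 0, η(y) → ∞ and η(y)/e^{2Cy} → 0 as y → ∞, then u(y) ≤ η(y) for all sufficiently large y. -/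
open Set Filter

lemma secondDerivTest_max (f f' : ℝ → ℝ) (x c : ℝ)
    (hd : ∀ᶠ y in nhds x, HasDerivAt f (f' y) y)
    (hd2 : HasDerivAt f' c x) (hmax : IsLocalMax f x) : c ≤ 0 := by
  by_contra hpos
  push_neg at hpos
  have hf'x : f' x = 0 := by
    have h1 : deriv f x = 0 := hmax.deriv_eq_zero
    have h2 : deriv f x = f' x := hd.self_of_nhds.deriv
    rw [h2] at h1; exact h1
  have hslope : Tendsto (slope f' x) (nhdsWithin x {x}ᶜ) (nhds c) :=
    hasDerivAt_iff_tendsto_slope.mp hd2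
  have hslope' : Tendsto (slope f' x) (nhdsWithin x (Ioi x)) (nhds c) :=
    hslope.mono_left (nhdsWithin_mono x (fun y hy => ne_of_gt hy))
  have hev : ∀ᶠ y in nhdsWithin x (Ioi x), 0 < slope f' x y :=
    hslope' (eventually_gt_nhds hpos : ∀ᶠ z in nhds c, 0 < z)
  have hev2 : ∀ᶠ y in nhdsWithin x (Ioi x), 0 < f' y := by
    filter_upwards [hev, self_mem_nhdsWithin] with y hy hxy
    have hslope_eq : slope f' x y = f' y / (y - x) := by
      rw [slope_def_field, hf'x]; ring
    rw [hslope_eq] at hy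
    have hyx : 0 < y - x := sub_pos.mpr hxy
    by_contra hle
    push_neg at hle
    have : f' y / (y - x) ≤ 0 := div_nonpos_of_nonpos_of_nonneg hle hyx.le
    linarith
  obtain ⟨u, hu, hIoo⟩ := mem_nhdsGT_iff_exists_Ioo_subset.mp hev2
  obtain ⟨ε, hε, hball⟩ := Metric.eventually_nhds_iff.mp (hd.and hmax)
  set w : ℝ := min (x + ε / 2) ((x + u) / 2) with hw_def
  have hxw : x < w := by
    apply lt_min (by linarith) (by have := hu; simp only [mem_Ioi] at this; linarith)
  have hw1 : w ≤ x + ε / 2 := min_le_left _ _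
  have hw2 : w ≤ (x + u) / 2 := min_le_right _ _
  have hwu : w < u := by have := hu; simp only [mem_Ioi] at this; linarith
  have hIcc : ∀ y ∈ Icc x w, dist y x < ε := by
    intro y hy
    rw [Real.dist_eq, abs_lt]
    constructor <;> [linarith [hy.1]; linarith [hy.2]]
  have hcont : ContinuousOn f (Icc x w) := fun y hy =>
    ((hball (hIcc y hy)).1.continuousAt).continuousWithinAt
  have hderiv : ∀ y ∈ Ioo x w, HasDerivAt f (f' y) y := fun y hy =>
    (hball (hIcc y ⟨hy.1.le, hy.2.le⟩)).1
  obtain ⟨z, hz, hzslope⟩ := exists_hasDerivAt_eq_slope f f' hxw hcont hderiv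
  have hfz : 0 < f' z := hIoo ⟨hz.1, lt_trans hz.2 hwu⟩
  have hfw : f w ≤ f x := (hball (hIcc w ⟨hxw.le, le_refl w⟩)).2
  rw [hzslope] at hfz
  have : 0 < (f w - f x) / (w - x) := hfz
  have hwx : 0 < w - x := sub_pos.mpr hxw
  have h2 : 0 < f w - f x := by
    by_contra hne
    push_neg at hne
    have : (f w - f x) / (w - x) ≤ 0 := div_nonpos_of_nonpos_of_nonneg (by linarith) hwx.le
    linarith
  linarith


lemma interiorFacts (y₀ : ℝ) (f : ℝ → ℝ) (hf : ContDiffOn ℝ 2 f (Ici y₀)) {y : ℝ} (hy : y₀ < y) :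
    HasDerivAt f (derivWithin f (Ici y₀) y) y ∧
    HasDerivAt (derivWithin f (Ici y₀)) (derivWithin (derivWithin f (Ici y₀)) (Ici y₀) y) y := by
  have hmem : Ici y₀ ∈ nhds y := Ici_mem_nhds hy
  have hf1 : ContDiffOn ℝ 1 (derivWithin f (Ici y₀)) (Ici y₀) :=
    hf.derivWithin (uniqueDiffOn_Ici y₀) (by norm_num : (1:WithTop ℕ∞) + 1 ≤ 2)
  constructor
  · have h1 : DifferentiableAt ℝ f y :=
      (hf.differentiableOn (by norm_num)).differentiableAt hmem
    rw [derivWithin_of_mem_nhds hmem]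
    exact h1.hasDerivAt
  · have h2 : DifferentiableAt ℝ (derivWithin f (Ici y₀)) y :=
      (hf1.differentiableOn (by norm_num)).differentiableAt hmem
    rw [derivWithin_of_mem_nhds hmem]
    exact h2.hasDerivAt

lemma derivWithinCont (y₀ : ℝ) (f : ℝ → ℝ) (hf : ContDiffOn ℝ 2 f (Ici y₀)) :
    ContinuousOn (derivWithin f (Ici y₀)) (Ici y₀) :=
  ((hf.derivWithin (uniqueDiffOn_Ici y₀) (by norm_num : (1:WithTop ℕ∞) + 1 ≤ 2)).continuousOn)


set_option maxHeartbeats 1000000 in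
lemma core_no_max (y₀ : ℝ) (b atld d η u : ℝ → ℝ)
    (huC2 : ContDiffOn ℝ 2 u (Ici y₀)) (hηC2 : ContDiffOn ℝ 2 η (Ici y₀))
    (hupos : ∀ y ∈ Ici y₀, 0 < u y) (hηpos : ∀ y ∈ Ici y₀, 0 < η y)
    (hbne : ∀ y ∈ Ici y₀, b y ≠ 0)
    (hHJB : ∀ y ∈ Ici y₀,
      (1 / 2) * (b y) ^ 2 * derivWithin (derivWithin u (Ici y₀)) (Ici y₀) y
        + atld y * derivWithin u (Ici y₀) y + η y * u y - (u y) ^ 2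
        - d y * (derivWithin u (Ici y₀) y) ^ 2 / u y = 0)
    (hΨle : ∀ y ∈ Ici y₀,
      (1 : ℝ) + ((1 / 2) * (b y) ^ 2 * derivWithin (derivWithin η (Ici y₀)) (Ici y₀) y
        + atld y * derivWithin η (Ici y₀) y) / (η y) ^ 2
        - d y * (derivWithin η (Ici y₀) y) ^ 2 / (η y) ^ 3 ≤ 1)
    (z : ℝ) (hz : y₀ < z) (hlt : η z < u z)
    (hmax : IsLocalMax (fun y => u y / η y) z) : False := by
  have hzS : z ∈ Ici y₀ := le_of_lt hz
  have huz : 0 < u z := hupos z hzS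
  have hηz : 0 < η z := hηpos z hzS
  set U1 : ℝ → ℝ := derivWithin u (Ici y₀) with hU1
  set H1 : ℝ → ℝ := derivWithin η (Ici y₀) with hH1
  have Hu := (interiorFacts y₀ u huC2 hz).1
  have Hu2 := (interiorFacts y₀ u huC2 hz).2
  have Hη := (interiorFacts y₀ η hηC2 hz).1
  have Hη2 := (interiorFacts y₀ η hηC2 hz).2
  -- first derivative of v at z is 0
  have Hv : HasDerivAt (fun y => u y / η y)
      ((U1 z * η z - u z * H1 z) / (η z) ^ 2) z := Hu.div Hη hηz.ne'
  have hv0 : (U1 z * η z - u z * H1 z) / (η z) ^ 2 = 0 := by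
    rw [← Hv.deriv]; exact hmax.deriv_eq_zero
  have hF0 : U1 z * η z - u z * H1 z = 0 := by
    have h2 : ((η z) ^ 2 : ℝ) ≠ 0 := by positivity
    field_simp at hv0; linarith [hv0]
  -- second derivative test
  have hvd : ∀ᶠ y in nhds z, HasDerivAt (fun y => u y / η y)
      ((fun y => (U1 y * η y - u y * H1 y) / (η y) ^ 2) y) y := by
    filter_upwards [Ioi_mem_nhds hz] with y hy
    exact ((interiorFacts y₀ u huC2 hy).1).div ((interiorFacts y₀ η hηC2 hy).1)
      (hηpos y (mem_Ici.mpr (le_of_lt (mem_Ioi.mp hy)))).ne'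
  have HF : HasDerivAt (fun y => U1 y * η y - u y * H1 y)
      ((derivWithin U1 (Ici y₀) z * η z + U1 z * H1 z)
        - (U1 z * H1 z + u z * derivWithin H1 (Ici y₀) z)) z :=
    (Hu2.mul Hη).sub (Hu.mul Hη2)
  have Hden : HasDerivAt (fun y => (η y) ^ 2) (2 * η z ^ 1 * H1 z) z := Hη.pow 2
  have Hvd2 : HasDerivAt (fun y => (U1 y * η y - u y * H1 y) / (η y) ^ 2)
      ((((derivWithin U1 (Ici y₀) z * η z + U1 z * H1 z)
        - (U1 z * H1 z + u z * derivWithin H1 (Ici y₀) z)) * (η z) ^ 2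
        - (U1 z * η z - u z * H1 z) * (2 * η z ^ 1 * H1 z)) / ((η z) ^ 2) ^ 2) z :=
    HF.div Hden (by positivity)
  have hc : (((derivWithin U1 (Ici y₀) z * η z + U1 z * H1 z)
        - (U1 z * H1 z + u z * derivWithin H1 (Ici y₀) z)) * (η z) ^ 2
        - (U1 z * η z - u z * H1 z) * (2 * η z ^ 1 * H1 z)) / ((η z) ^ 2) ^ 2 ≤ 0 :=
    secondDerivTest_max _ _ z _ hvd Hvd2 hmax
  set U2 := derivWithin U1 (Ici y₀) z with hU2
  set H2 := derivWithin H1 (Ici y₀) z with hH2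
  have hden4 : (0:ℝ) < ((η z) ^ 2) ^ 2 := by positivity
  have hNle : ((U2 * η z + U1 z * H1 z) - (U1 z * H1 z + u z * H2)) * (η z) ^ 2
      - (U1 z * η z - u z * H1 z) * (2 * η z ^ 1 * H1 z) ≤ 0 := by
    have := (div_le_iff₀ hden4).mp hc
    linarith
  have hsec : U2 * η z ≤ u z * H2 := by
    have hF0m : (U1 z * η z - u z * H1 z) * (2 * η z ^ 1 * H1 z) = 0 := by
      rw [hF0]; ring
    have hη2 : (0:ℝ) < (η z) ^ 2 := by positivity
    nlinarith [hNle, hF0m]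
  -- HJB and Psi inequalities in polynomial form
  have hb2 : (0:ℝ) < (b z) ^ 2 := by
    have := hbne z hzS
    positivity
  have hF0' : U1 z * η z = u z * H1 z := by linarith [hF0]
  have hHJBz := hHJB z hzS
  have e1 : ((1/2) * (b z)^2 * U2 + atld z * U1 z + η z * u z - (u z)^2) * u z
      = d z * (U1 z)^2 := by
    have h2 : (1/2) * (b z)^2 * U2 + atld z * U1 z + η z * u z - (u z)^2
        = d z * (U1 z)^2 / u z := by linarith [hHJBz]
    rw [h2, div_mul_cancel₀ _ huz.ne']
  have hPz := hΨle z hzS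
  have e2 : ((1/2) * (b z)^2 * H2 + atld z * H1 z) * η z ≤ d z * (H1 z)^2 := by
    have h3 : ((1/2) * (b z)^2 * H2 + atld z * H1 z) / (η z)^2
        ≤ d z * (H1 z)^2 / (η z)^3 := by linarith [hPz]
    have h4 := (div_le_div_iff₀ (by positivity : (0:ℝ) < (η z)^2)
      (by positivity : (0:ℝ) < (η z)^3)).mp h3
    nlinarith [h4, pow_pos hηz 2]
  have e1h : (1/2)*(b z)^2*U2*(u z)*(η z)^2
      = (d z*(U1 z)^2 - atld z*(U1 z)*(u z) - η z*(u z)^2 + (u z)^3)*(η z)^2 := by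
    linear_combination (η z)^2 * e1
  have h5 := mul_le_mul_of_nonneg_left hsec
    (show (0:ℝ) ≤ (1/2)*(b z)^2*(u z * η z) by positivity)
  have h6 := mul_le_mul_of_nonneg_right e2 (sq_nonneg (u z))
  have h7d : d z * (U1 z * η z)^2 = d z * (u z * H1 z)^2 := by rw [hF0']
  have f3h : atld z * (U1 z * η z) * (u z * η z)
      = atld z * (u z * H1 z) * (u z * η z) := by rw [hF0']
  have hpos : (0:ℝ) < (u z - η z) * (u z)^2 * (η z)^2 := by
    have := sub_pos.mpr hlt
    positivity
  nlinarith [e1h, h5, h6, h7d, f3h, hpos]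

/-- mean-reverting dichotomy.  If `u/η → 1`,
`ā := ã/η + (b² - 2d) η'/η² ≤ 0`, `η > 0` and `Ψη ≤ 1` on `[y₀,∞)`, then eventually
`u > η` or eventually `u ≤ η`; if moreover `ã/b² ≤ -C < 0` on `[y₀,∞)`, `η → ∞` and
`η(y)/e^{2Cy} → 0`, then eventually `u ≤ η`. -/
theorem statement16
    (E : Set ℝ) (hE : E = Set.univ ∨ ∃ c : ℝ, E = Set.Ioi c)
    (R : ℝ) (hR : 0 < R) (hR1 : R ≠ 1)
    (r lam sigma a b rho delta : ℝ → ℝ)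
    (hrlip : LocallyLipschitzOn E r) (hlamlip : LocallyLipschitzOn E lam)
    (hsigmalip : LocallyLipschitzOn E sigma) (halip : LocallyLipschitzOn E a)
    (hblip : LocallyLipschitzOn E b) (hrholip : LocallyLipschitzOn E rho)
    (hdeltalip : LocallyLipschitzOn E delta)
    (hbne : ∀ y ∈ E, b y ≠ 0) (hsigmapos : ∀ y ∈ E, 0 < sigma y)
    (hrho : ∀ y ∈ E, rho y ∈ Icc (-1 : ℝ) 1)
    (η atld d : ℝ → ℝ)
    (hηdef : ∀ y, η y = (1 / R) * (delta y - (1 - R) * (r y + (lam y) ^ 2 / (2 * R))))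
    (hatlddef : ∀ y, atld y = a y + ((1 - R) / R) * rho y * lam y * b y)
    (hddef : ∀ y, d y = (1 / 2) * (b y) ^ 2 * ((1 - (rho y) ^ 2) * R + (rho y) ^ 2 + 1))
    (y₀ : ℝ) (hy₀ : y₀ ∈ E)
    (u : ℝ → ℝ) (huC2 : ContDiffOn ℝ 2 u (Ici y₀))
    (hupos : ∀ y ∈ Ici y₀, 0 < u y)
    (hHJB : ∀ y ∈ Ici y₀,
      (1 / 2) * (b y) ^ 2 * derivWithin (derivWithin u (Ici y₀)) (Ici y₀) y
        + atld y * derivWithin u (Ici y₀) y + η y * u y - (u y) ^ 2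
        - d y * (derivWithin u (Ici y₀) y) ^ 2 / u y = 0)
    (hratio : Filter.Tendsto (fun y => u y / η y) Filter.atTop (nhds 1))
    (hηC2 : ContDiffOn ℝ 2 η (Ici y₀))
    (hηpos : ∀ y ∈ Ici y₀, 0 < η y)
    (habar : ∀ y ∈ Ici y₀,
      atld y / η y + ((b y) ^ 2 - 2 * d y) * derivWithin η (Ici y₀) y / (η y) ^ 2 ≤ 0)
    (hΨle : ∀ y ∈ Ici y₀, PsiW b atld d (Ici y₀) η y ≤ 1) :
    ((∀ᶠ y in Filter.atTop, η y < u y) ∨ (∀ᶠ y in Filter.atTop, u y ≤ η y)) ∧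
    (∀ C > (0 : ℝ), (∀ y ∈ Ici y₀, atld y / (b y) ^ 2 ≤ -C) →
      Filter.Tendsto η Filter.atTop Filter.atTop →
      Filter.Tendsto (fun y => η y / Real.exp (2 * C * y)) Filter.atTop (nhds 0) →
      ∀ᶠ y in Filter.atTop, u y ≤ η y) := by
  classical
  have hsub : Ici y₀ ⊆ E := by
    rcases hE with h | ⟨c, h⟩
    · rw [h]; exact subset_univ _
    · rw [h] at hy₀ ⊢; exact fun y hy => mem_Ioi.mpr (lt_of_lt_of_le (mem_Ioi.mp hy₀) (mem_Ici.mp hy))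
  have hbne' : ∀ y ∈ Ici y₀, b y ≠ 0 := fun y hy => hbne y (hsub hy)
  have hΨle' : ∀ y ∈ Ici y₀,
      (1 : ℝ) + ((1 / 2) * (b y) ^ 2 * derivWithin (derivWithin η (Ici y₀)) (Ici y₀) y
        + atld y * derivWithin η (Ici y₀) y) / (η y) ^ 2
        - d y * (derivWithin η (Ici y₀) y) ^ 2 / (η y) ^ 3 ≤ 1 := by
    intro y hy
    have := hΨle y hy
    simpa [PsiW] using this
  have core := core_no_max y₀ b atld d η u huC2 hηC2 hupos hηpos hbne' hHJB hΨle'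
  have dich : (∀ᶠ y in Filter.atTop, η y < u y) ∨ (∀ᶠ y in Filter.atTop, u y ≤ η y) := by
    by_contra hcon
    push_neg at hcon
    obtain ⟨h1, h2⟩ := hcon
    obtain ⟨q, hq1, hq2⟩ := (h1.and_eventually (eventually_gt_atTop y₀)).exists
    obtain ⟨p, hp1, hp2⟩ := (h2.and_eventually (eventually_gt_atTop q)).exists
    obtain ⟨q', hq'1, hq'2⟩ := (h1.and_eventually (eventually_gt_atTop p)).exists
    have hqq' : q < q' := lt_trans hp2 hq'2
    have hIccS : Icc q q' ⊆ Ici y₀ := fun y hy => le_trans (le_of_lt hq2) hy.1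
    have hvcont : ContinuousOn (fun y => u y / η y) (Icc q q') :=
      (huC2.continuousOn.mono hIccS).div (hηC2.continuousOn.mono hIccS)
        (fun y hy => (hηpos y (hIccS hy)).ne')
    obtain ⟨z, hzmem, hzmax⟩ :=
      isCompact_Icc.exists_isMaxOn (nonempty_Icc.mpr hqq'.le) hvcont
    have hpmem : p ∈ Icc q q' := ⟨hp2.le, hq'2.le⟩
    have hvp : 1 < u p / η p := (one_lt_div (hηpos p (hIccS hpmem))).mpr hp1
    have hvz : 1 < u z / η z := lt_of_lt_of_le hvp (hzmax hpmem)
    have hvq : u q / η q ≤ 1 :=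
      div_le_one_of_le₀ hq1 (hηpos q (hIccS ⟨le_refl q, hqq'.le⟩)).le
    have hvq' : u q' / η q' ≤ 1 :=
      div_le_one_of_le₀ hq'1 (hηpos q' (hIccS ⟨hqq'.le, le_refl q'⟩)).le
    have hzq : q < z := by
      rcases lt_or_eq_of_le hzmem.1 with h | h
      · exact h
      · exfalso; rw [← h] at hvz; linarith
    have hzq' : z < q' := by
      rcases lt_or_eq_of_le hzmem.2 with h | h
      · exact h
      · exfalso; rw [h] at hvz; linarith
    have hlocal : IsLocalMax (fun y => u y / η y) z :=
      hzmax.isLocalMax (Icc_mem_nhds hzq hzq')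
    have hz0 : y₀ < z := lt_trans hq2 hzq
    have hηuz : η z < u z := by
      have hη := hηpos z (hIccS hzmem)
      exact (one_lt_div hη).mp hvz
    exact core z hz0 hηuz hlocal
  refine ⟨dich, ?_⟩
  intro C hC habC hηtop hηexp
  rcases dich with hgt | hle
  · exfalso
    obtain ⟨y₁', hy₁'⟩ := eventually_atTop.mp hgt
    set y₁ : ℝ := max y₁' (y₀ + 1) with hy₁def
    have hy₁0 : y₀ < y₁ := lt_of_lt_of_le (by linarith) (le_max_right _ _)
    have hgt' : ∀ y, y₁ ≤ y → η y < u y := fun y hy =>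
      hy₁' y (le_trans (le_max_left _ _) hy)
    have hutop : Tendsto u atTop atTop := by
      apply tendsto_atTop_mono' atTop _ hηtop
      filter_upwards [eventually_ge_atTop y₁] with y hy
      exact (hgt' y hy).le
    have hfact : ∀ x, y₀ < x → HasDerivAt u (derivWithin u (Ici y₀) x) x :=
      fun x hx => (interiorFacts y₀ u huC2 hx).1
    have hfact2 : ∀ x, y₀ < x →
        HasDerivAt (derivWithin u (Ici y₀))
          (derivWithin (derivWithin u (Ici y₀)) (Ici y₀) x) x :=
      fun x hx => (interiorFacts y₀ u huC2 hx).2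
    have hU1cont : ContinuousOn (derivWithin u (Ici y₀)) (Ici y₀) :=
      derivWithinCont y₀ u huC2
    have hd0 : ∀ y ∈ Ici y₀, 0 ≤ d y := by
      intro y hy
      rw [hddef y]
      have hρ := hrho y (hsub hy)
      have hρ2 : (rho y) ^ 2 ≤ 1 := by nlinarith [hρ.1, hρ.2]
      have hbr : 0 ≤ (1 - rho y ^ 2) * R := mul_nonneg (by linarith) hR.le
      have hX : 0 ≤ (1 - rho y ^ 2) * R + rho y ^ 2 + 1 := by nlinarith [sq_nonneg (rho y)]
      exact mul_nonneg (by positivity) hX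
    have hstepC : ∀ y, y₁ ≤ y → 0 ≤ derivWithin u (Ici y₀) y →
        2 * C * derivWithin u (Ici y₀) y
          ≤ derivWithin (derivWithin u (Ici y₀)) (Ici y₀) y := by
      intro y hy hU1y
      have hyS : y ∈ Ici y₀ := le_trans hy₁0.le hy
      have hHJBy := hHJB y hyS
      have hb2 : (0:ℝ) < (b y) ^ 2 := by have := hbne' y hyS; positivity
      have hA : atld y ≤ -C * (b y) ^ 2 := by
        have h := habC y hyS
        rw [div_le_iff₀ hb2] at h; linarith
      have huy := hupos y hyS
      have hηu : η y < u y := hgt' y hy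
      have hdd : 0 ≤ d y * (derivWithin u (Ici y₀) y) ^ 2 / u y :=
        div_nonneg (mul_nonneg (hd0 y hyS) (sq_nonneg _)) huy.le
      have h8 : atld y * derivWithin u (Ici y₀) y
          ≤ -C * (b y) ^ 2 * derivWithin u (Ici y₀) y :=
        mul_le_mul_of_nonneg_right hA hU1y
      nlinarith [hHJBy, hdd, h8, hb2, mul_pos huy (sub_pos.mpr hηu)]
    obtain ⟨y', hy'1, hy'2⟩ :=
      ((hutop.eventually_gt_atTop (u y₁)).and (eventually_gt_atTop y₁)).exists
    have hcontIcc : ContinuousOn u (Icc y₁ y') :=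
      huC2.continuousOn.mono (fun t ht => le_trans hy₁0.le ht.1)
    obtain ⟨y₂, hy₂mem, hy₂eq⟩ := exists_hasDerivAt_eq_slope u
      (derivWithin u (Ici y₀)) hy'2 hcontIcc
      (fun x hx => hfact x (lt_trans hy₁0 hx.1))
    have hy₂1 : y₁ < y₂ := hy₂mem.1
    have hy₂0 : y₀ < y₂ := lt_trans hy₁0 hy₂1
    have hU1y₂ : 0 < derivWithin u (Ici y₀) y₂ := by
      rw [hy₂eq]
      exact div_pos (by linarith) (by linarith [hy₂mem.2])
    have hstepD : ∀ y, y₂ ≤ y → 0 < derivWithin u (Ici y₀) y := by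
      intro y hy
      by_contra hneg
      push_neg at hneg
      set K : Set ℝ := Icc y₂ y ∩ (derivWithin u (Ici y₀)) ⁻¹' (Iic 0) with hKdef
      have hKne : K.Nonempty := ⟨y, ⟨⟨hy, le_refl y⟩, hneg⟩⟩
      have hKclosed : IsClosed K :=
        (hU1cont.mono (fun t (ht : t ∈ Icc y₂ y) =>
          le_trans hy₂0.le ht.1)).preimage_isClosed_of_isClosed
          isClosed_Icc isClosed_Iic
      have hKbdd : BddBelow K := ⟨y₂, fun t ht => ht.1.1⟩
      set z := sInf K with hzdef
      have hzK : z ∈ K := hKclosed.csInf_mem hKne hKbdd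
      have hz2 : derivWithin u (Ici y₀) z ≤ 0 := hzK.2
      have hzy₂ : y₂ < z := lt_of_le_of_ne hzK.1.1 (by
        intro h; rw [← h] at hz2; linarith)
      have hlow : ∀ t, t ∈ Ico y₂ z → 0 < derivWithin u (Ici y₀) t := by
        intro t ht
        by_contra h
        push_neg at h
        have htK : t ∈ K := ⟨⟨ht.1, le_trans ht.2.le hzK.1.2⟩, h⟩
        have := csInf_le hKbdd htK
        linarith [ht.2]
      have hmono : MonotoneOn (derivWithin u (Ici y₀)) (Icc y₂ z) := by
        apply monotoneOn_of_deriv_nonneg (convex_Icc _ _)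
          (hU1cont.mono (fun t ht => le_trans hy₂0.le ht.1))
          (fun x hx => ?_) (fun x hx => ?_)
        · rw [interior_Icc] at hx
          exact ((hfact2 x (lt_trans hy₂0 hx.1)).differentiableAt).differentiableWithinAt
        · rw [interior_Icc] at hx
          have hx0 : y₀ < x := lt_trans hy₂0 hx.1
          rw [(hfact2 x hx0).deriv]
          have hxpos := hlow x ⟨hx.1.le, hx.2⟩
          have := hstepC x (le_trans hy₂1.le hx.1.le) hxpos.le
          nlinarith [hC, hxpos]
      have h1 := hmono (left_mem_Icc.mpr hzK.1.1) (right_mem_Icc.mpr hzK.1.1) hzK.1.1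
      linarith
    set Kc : ℝ := derivWithin u (Ici y₀) y₂ * Real.exp (-(2 * C * y₂)) with hKcdef
    have hKc : 0 < Kc := mul_pos hU1y₂ (Real.exp_pos _)
    have hgder : ∀ x, y₀ < x →
        HasDerivAt (fun y => derivWithin u (Ici y₀) y * Real.exp (-(2 * C * y)))
          (derivWithin (derivWithin u (Ici y₀)) (Ici y₀) x * Real.exp (-(2 * C * x))
            + derivWithin u (Ici y₀) x * (Real.exp (-(2 * C * x)) * (-(2 * C)))) x := by
      intro x hx0
      have hlin : HasDerivAt (fun y : ℝ => -(2 * C * y)) (-(2 * C)) x := by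
        exact (hasDerivAt_mul_const (x := x) (-(2 * C))).congr_of_eventuallyEq (Filter.Eventually.of_forall fun y => by ring)
      exact (hfact2 x hx0).mul hlin.exp
    have hgmono : MonotoneOn
        (fun y => derivWithin u (Ici y₀) y * Real.exp (-(2 * C * y))) (Ici y₂) := by
      apply monotoneOn_of_deriv_nonneg (convex_Ici _)
        ((hU1cont.mono (Ici_subset_Ici.mpr hy₂0.le)).mul
          (Continuous.continuousOn (by fun_prop)))
        (fun x hx => ?_) (fun x hx => ?_)
      · rw [interior_Ici] at hx
        exact (hgder x (lt_trans hy₂0 hx)).differentiableAt.differentiableWithinAt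
      · rw [interior_Ici] at hx
        rw [show (derivWithin u (Ici y₀) * fun y => Real.exp (-(2 * C * y))) = (fun y => derivWithin u (Ici y₀) y * Real.exp (-(2 * C * y))) from rfl, (hgder x (lt_trans hy₂0 hx)).deriv]
        have h1 := hstepC x (le_trans hy₂1.le hx.le) (hstepD x hx.le).le
        nlinarith [Real.exp_pos (-(2 * C * x)), hstepD x hx.le]
    have hexp_lb : ∀ y, y₂ ≤ y →
        Kc * Real.exp (2 * C * y) ≤ derivWithin u (Ici y₀) y := by
      intro y hy
      have h1 : Kc ≤ derivWithin u (Ici y₀) y * Real.exp (-(2 * C * y)) :=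
        hgmono (mem_Ici.mpr le_rfl) (mem_Ici.mpr hy) hy
      have he : (0:ℝ) < Real.exp (2 * C * y) := Real.exp_pos _
      have h2 := mul_le_mul_of_nonneg_right h1 he.le
      have h4 : Real.exp (-(2 * C * y)) * Real.exp (2 * C * y) = 1 := by
        rw [← Real.exp_add]; norm_num
      calc Kc * Real.exp (2 * C * y)
          ≤ derivWithin u (Ici y₀) y * Real.exp (-(2 * C * y)) * Real.exp (2 * C * y) := h2
        _ = derivWithin u (Ici y₀) y := by rw [mul_assoc, h4, mul_one]
    have h2C : (0:ℝ) < 2 * C := by linarith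
    set M : ℝ := u y₂ - Kc / (2 * C) * Real.exp (2 * C * y₂) with hM
    have hhder : ∀ x, y₀ < x →
        HasDerivAt (fun y => u y - Kc / (2 * C) * Real.exp (2 * C * y))
          (derivWithin u (Ici y₀) x - Kc / (2 * C) * (Real.exp (2 * C * x) * (2 * C))) x := by
      intro x hx0
      have hlin : HasDerivAt (fun y : ℝ => 2 * C * y) (2 * C) x := by
        simpa using (hasDerivAt_id x).const_mul (2 * C)
      exact (hfact x hx0).sub (hlin.exp.const_mul (Kc / (2 * C)))
    have hFmono : MonotoneOn (fun y => u y - Kc / (2 * C) * Real.exp (2 * C * y))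
        (Ici y₂) := by
      apply monotoneOn_of_deriv_nonneg (convex_Ici _)
        ((huC2.continuousOn.mono (Ici_subset_Ici.mpr hy₂0.le)).sub
          (Continuous.continuousOn (by fun_prop)))
        (fun x hx => ?_) (fun x hx => ?_)
      · rw [interior_Ici] at hx
        exact (hhder x (lt_trans hy₂0 hx)).differentiableAt.differentiableWithinAt
      · rw [interior_Ici] at hx
        rw [show (u - fun y => Kc / (2 * C) * Real.exp (2 * C * y)) = (fun y => u y - Kc / (2 * C) * Real.exp (2 * C * y)) from rfl, (hhder x (lt_trans hy₂0 hx)).deriv]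
        have h1 := hexp_lb x hx.le
        have hce : Kc / (2 * C) * (Real.exp (2 * C * x) * (2 * C))
            = Kc * Real.exp (2 * C * x) := by
          field_simp
          try ring
        rw [hce]
        linarith
    have hulb : ∀ y, y₂ ≤ y →
        Kc / (2 * C) * Real.exp (2 * C * y) + M ≤ u y := by
      intro y hy
      have h1 := hFmono (mem_Ici.mpr le_rfl) (mem_Ici.mpr hy) hy
      simp only [hM] at h1 ⊢
      linarith
    have hexp_top : Tendsto (fun y : ℝ => Real.exp (2 * C * y)) atTop atTop :=
      Real.tendsto_exp_atTop.comp (Tendsto.const_mul_atTop h2C tendsto_id)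
    have hMe : Tendsto (fun y => M / Real.exp (2 * C * y)) atTop (nhds 0) :=
      Tendsto.div_atTop tendsto_const_nhds hexp_top
    have hue : Tendsto (fun y => u y / Real.exp (2 * C * y)) atTop (nhds 0) := by
      have h1 := hratio.mul hηexp
      rw [one_mul] at h1
      apply h1.congr'
      filter_upwards [eventually_ge_atTop y₀] with y hy
      have hηy := (hηpos y hy).ne'
      have hey := (Real.exp_pos (2 * C * y)).ne'
      field_simp
      try ring
    have hdiff : Tendsto
        (fun y => u y / Real.exp (2 * C * y) - M / Real.exp (2 * C * y))
        atTop (nhds 0) := by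
      have := hue.sub hMe
      simpa using this
    have hev : ∀ᶠ y in atTop,
        Kc / (2 * C) ≤ u y / Real.exp (2 * C * y) - M / Real.exp (2 * C * y) := by
      filter_upwards [eventually_ge_atTop y₂] with y hy
      have h1 := hulb y hy
      have he : (0:ℝ) < Real.exp (2 * C * y) := Real.exp_pos _
      rw [div_sub_div_same, le_div_iff₀ he]
      linarith
    have hfinal := ge_of_tendsto hdiff hev
    have hKCpos : (0:ℝ) < Kc / (2 * C) := div_pos hKc h2C
    linarith
  · exact hle
end

section
/- Suppose E = (E₋, ∞) and let u be a positive solution of the HJB equation (1/2)b²u'' + ã u' + η u − u² − d (u')²/u = 0 on [y₀,∞) with u(y)/η(y) → 1 as y → ∞ and u(y) ≤ η(y) for all sufficiently large y. Assume ā := ã/η + (b²−2d)η'/η² ≤ 0 and η > 0 on [y₀,∞), and that Ψη is increasing and concave on [y₀,∞). Then u(y) ≤ η(y)·Ψη(y) for all sufficiently large y. -/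
open Set Filter

set_option maxHeartbeats 2000000 in
open Topology in
/-- if `u/η → 1`, eventually `u ≤ η`, `ā ≤ 0` and `η > 0` on `[y₀,∞)`, and
`Ψη` is increasing and concave on `[y₀,∞)`, then eventually `u ≤ η · Ψη`. -/
theorem statement17
    (E : Set ℝ) (hE : E = Set.univ ∨ ∃ c : ℝ, E = Set.Ioi c)
    (R : ℝ) (hR : 0 < R) (hR1 : R ≠ 1)
    (r lam sigma a b rho delta : ℝ → ℝ)
    (hrlip : LocallyLipschitzOn E r) (hlamlip : LocallyLipschitzOn E lam)
    (hsigmalip : LocallyLipschitzOn E sigma) (halip : LocallyLipschitzOn E a)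
    (hblip : LocallyLipschitzOn E b) (hrholip : LocallyLipschitzOn E rho)
    (hdeltalip : LocallyLipschitzOn E delta)
    (hbne : ∀ y ∈ E, b y ≠ 0) (hsigmapos : ∀ y ∈ E, 0 < sigma y)
    (hrho : ∀ y ∈ E, rho y ∈ Icc (-1 : ℝ) 1)
    (η atld d : ℝ → ℝ)
    (hηdef : ∀ y, η y = (1 / R) * (delta y - (1 - R) * (r y + (lam y) ^ 2 / (2 * R))))
    (hatlddef : ∀ y, atld y = a y + ((1 - R) / R) * rho y * lam y * b y)
    (hddef : ∀ y, d y = (1 / 2) * (b y) ^ 2 * ((1 - (rho y) ^ 2) * R + (rho y) ^ 2 + 1))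
    (y₀ : ℝ) (hy₀ : y₀ ∈ E)
    (u : ℝ → ℝ) (huC2 : ContDiffOn ℝ 2 u (Ici y₀))
    (hupos : ∀ y ∈ Ici y₀, 0 < u y)
    (hHJB : ∀ y ∈ Ici y₀,
      (1 / 2) * (b y) ^ 2 * derivWithin (derivWithin u (Ici y₀)) (Ici y₀) y
        + atld y * derivWithin u (Ici y₀) y + η y * u y - (u y) ^ 2
        - d y * (derivWithin u (Ici y₀) y) ^ 2 / u y = 0)
    (hratio : Filter.Tendsto (fun y => u y / η y) Filter.atTop (nhds 1))
    (hule : ∀ᶠ y in Filter.atTop, u y ≤ η y)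
    (hηC2 : ContDiffOn ℝ 2 η (Ici y₀))
    (hηpos : ∀ y ∈ Ici y₀, 0 < η y)
    (habar : ∀ y ∈ Ici y₀,
      atld y / η y + ((b y) ^ 2 - 2 * d y) * derivWithin η (Ici y₀) y / (η y) ^ 2 ≤ 0)
    (hΨmono : MonotoneOn (PsiW b atld d (Ici y₀) η) (Ici y₀))
    (hΨconc : ConcaveOn ℝ (Ici y₀) (PsiW b atld d (Ici y₀) η)) :
    ∀ᶠ y in Filter.atTop, u y ≤ η y * PsiW b atld d (Ici y₀) η y := by
  set S : Set ℝ := Ici y₀ with hSdef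
  have hSE : S ⊆ E := by
    rcases hE with h | ⟨c, h⟩
    · rw [h]; exact subset_univ _
    · rw [h] at hy₀ ⊢; exact fun x hx => mem_Ioi.mpr (lt_of_lt_of_le (mem_Ioi.mp hy₀) (mem_Ici.mp hx))
  have hUD : UniqueDiffOn ℝ S := uniqueDiffOn_Ici y₀
  have memS : ∀ {x : ℝ}, y₀ ≤ x → x ∈ S := fun h => mem_Ici.mpr h
  set u1 := derivWithin u S with hu1def
  set u2 := derivWithin u1 S with hu2def
  set e1 := derivWithin η S with he1def
  set e2 := derivWithin e1 S with he2def
  have hu1C : ContDiffOn ℝ 1 u1 S := huC2.derivWithin hUD (by norm_num)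
  have he1C : ContDiffOn ℝ 1 e1 S := hηC2.derivWithin hUD (by norm_num)
  have hmem : ∀ {x : ℝ}, y₀ < x → S ∈ 𝓝 x := fun hx => Ici_mem_nhds hx
  have hDu : ∀ x, y₀ < x → HasDerivAt u (u1 x) x := by
    intro x hx
    have h1 : DifferentiableAt ℝ u x :=
      (huC2.differentiableOn (by norm_num)).differentiableAt (hmem hx)
    have h2 := h1.hasDerivAt
    rwa [← derivWithin_of_mem_nhds (hmem hx)] at h2
  have hDu1 : ∀ x, y₀ < x → HasDerivAt u1 (u2 x) x := by
    intro x hx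
    have h1 : DifferentiableAt ℝ u1 x :=
      (hu1C.differentiableOn (by norm_num)).differentiableAt (hmem hx)
    have h2 := h1.hasDerivAt
    rwa [← derivWithin_of_mem_nhds (hmem hx)] at h2
  have hDe : ∀ x, y₀ < x → HasDerivAt η (e1 x) x := by
    intro x hx
    have h1 : DifferentiableAt ℝ η x :=
      (hηC2.differentiableOn (by norm_num)).differentiableAt (hmem hx)
    have h2 := h1.hasDerivAt
    rwa [← derivWithin_of_mem_nhds (hmem hx)] at h2
  have hDe1 : ∀ x, y₀ < x → HasDerivAt e1 (e2 x) x := by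
    intro x hx
    have h1 : DifferentiableAt ℝ e1 x :=
      (he1C.differentiableOn (by norm_num)).differentiableAt (hmem hx)
    have h2 := h1.hasDerivAt
    rwa [← derivWithin_of_mem_nhds (hmem hx)] at h2
  set φ : ℝ → ℝ := fun y => u y / η y with hφdef
  set φ1 : ℝ → ℝ := fun y => (u1 y * η y - u y * e1 y) / (η y) ^ 2 with hφ1def
  set φ2 : ℝ → ℝ := fun y =>
    (u2 y * η y - u y * e2 y) / (η y) ^ 2 - 2 * e1 y * (u1 y * η y - u y * e1 y) / (η y) ^ 3
    with hφ2def
  have hηne : ∀ x, y₀ ≤ x → η x ≠ 0 := fun x hx => (hηpos x hx).ne'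
  have hDφ : ∀ x, y₀ < x → HasDerivAt φ (φ1 x) x := by
    intro x hx
    exact (hDu x hx).div (hDe x hx) (hηne x hx.le)
  have hDφ1 : ∀ x, y₀ < x → HasDerivAt φ1 (φ2 x) x := by
    intro x hx
    have hne : η x ≠ 0 := hηne x hx.le
    have hN : HasDerivAt (fun y => u1 y * η y - u y * e1 y)
        (u2 x * η x + u1 x * e1 x - (u1 x * e1 x + u x * e2 x)) x :=
      ((hDu1 x hx).mul (hDe x hx)).sub ((hDu x hx).mul (hDe1 x hx))
    have hD : HasDerivAt (fun y => (η y) ^ 2) (2 * η x ^ 1 * e1 x) x := by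
      simpa using (hDe x hx).fun_pow 2
    have h := hN.fun_div hD (pow_ne_zero 2 hne)
    refine h.congr_deriv (Eq.symm ?_)
    simp only [hφ2def]
    rw [div_sub_div _ _ (pow_ne_zero 2 hne) (pow_ne_zero 3 hne),
      div_eq_div_iff (mul_ne_zero (pow_ne_zero 2 hne) (pow_ne_zero 3 hne))
        (pow_ne_zero 2 (pow_ne_zero 2 hne))]
    ring
  set ψ := PsiW b atld d S η with hψdef
  have hψx : ∀ x, ψ x = 1 + ((1 / 2) * (b x) ^ 2 * e2 x + atld x * e1 x) / (η x) ^ 2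
      - d x * (e1 x) ^ 2 / (η x) ^ 3 := fun x => rfl
  have key : ∀ x, y₀ < x → ψ x < φ x → 0 ≤ φ1 x → 0 < φ2 x := by
    intro x hx hw hp
    have hxS : x ∈ S := le_of_lt hx
    have hη : 0 < η x := hηpos x hxS
    have hu : 0 < u x := hupos x hxS
    have hbx : b x ≠ 0 := hbne x (hSE hxS)
    have hb2 : 0 < (b x) ^ 2 := by positivity
    have hd0 : 0 ≤ d x := by
      rw [hddef x]
      have h1 := (hrho x (hSE hxS)).1
      have h2 := (hrho x (hSE hxS)).2
      nlinarith [mul_nonneg (mul_nonneg hb2.le hR.le)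
          (mul_nonneg (sub_nonneg.2 h2) (by linarith : (0:ℝ) ≤ 1 + rho x)),
        mul_nonneg hb2.le (by positivity : (0:ℝ) ≤ rho x ^ 2 + 1)]
    have hH := hHJB x hxS
    have hid : (1/2)*(b x)^2*(η x)*(φ2 x)
        + (atld x * η x + ((b x)^2 - 2*d x) * e1 x) * (φ1 x)
        + (η x)^2 * (φ x) * (ψ x - φ x) - d x * (η x) * (φ1 x)^2 / (φ x)
        = 1 / 2 * b x ^ 2 * u2 x + atld x * u1 x + η x * u x - u x ^ 2
          - d x * u1 x ^ 2 / u x := by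
      simp only [hφdef, hφ1def, hφ2def, hψx]
      field_simp
      ring
    have hid0 := hid.trans hH
    have habx := habar x hxS
    have hA : atld x * η x + ((b x)^2 - 2*d x) * e1 x ≤ 0 := by
      have heq : atld x / η x + ((b x)^2 - 2*d x) * e1 x / (η x)^2
          = (atld x * η x + ((b x)^2 - 2*d x) * e1 x) / (η x)^2 := by
        field_simp
      rw [heq] at habx
      have h3 := mul_nonpos_of_nonpos_of_nonneg habx
        (le_of_lt (by positivity : (0:ℝ) < (η x)^2))
      calc atld x * η x + ((b x)^2 - 2*d x) * e1 x
          = (atld x * η x + ((b x)^2 - 2*d x) * e1 x) / (η x)^2 * (η x)^2 := by field_simp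
        _ ≤ 0 := h3
    have hφpos : 0 < φ x := div_pos hu hη
    have ht1 : (atld x * η x + ((b x)^2 - 2*d x) * e1 x) * φ1 x ≤ 0 :=
      mul_nonpos_of_nonpos_of_nonneg hA hp
    have ht2 : (η x)^2 * φ x * (ψ x - φ x) < 0 :=
      mul_neg_of_pos_of_neg (mul_pos (by positivity) hφpos) (by linarith)
    have ht3 : 0 ≤ d x * η x * (φ1 x)^2 / φ x :=
      div_nonneg (mul_nonneg (mul_nonneg hd0 hη.le) (sq_nonneg _)) hφpos.le
    have hprod : 0 < (1/2)*(b x)^2*(η x) * (φ2 x) := by linarith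
    exact (mul_pos_iff_of_pos_left (by positivity : (0:ℝ) < (1/2)*(b x)^2*(η x))).mp hprod
  -- continuity
  have contu : ContinuousOn u S := huC2.continuousOn
  have contη : ContinuousOn η S := hηC2.continuousOn
  have contu1 : ContinuousOn u1 S := hu1C.continuousOn
  have conte1 : ContinuousOn e1 S := he1C.continuousOn
  have conte2 : ContinuousOn e2 S := by
    have h0 : ContDiffOn ℝ 0 e2 S := he1C.derivWithin hUD (by norm_num)
    exact h0.continuousOn
  have hηneS : ∀ x ∈ S, η x ≠ 0 := fun x hx => hηne x hx
  have contφ : ContinuousOn φ S := contu.div contη hηneS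
  have contφ1 : ContinuousOn φ1 S :=
    ((contu1.mul contη).sub (contu.mul conte1)).div (contη.pow 2)
      (fun x hx => pow_ne_zero 2 (hηneS x hx))
  have contb : ContinuousOn b S := (hblip.continuousOn).mono hSE
  have controho : ContinuousOn rho S := (hrholip.continuousOn).mono hSE
  have contlam : ContinuousOn lam S := (hlamlip.continuousOn).mono hSE
  have conta : ContinuousOn a S := (halip.continuousOn).mono hSE
  have contatld : ContinuousOn atld S := by
    have h1 : atld = fun y => a y + ((1 - R) / R) * rho y * lam y * b y := funext hatlddef
    rw [h1]
    exact conta.add (((continuousOn_const.mul controho).mul contlam).mul contb)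
  have contd : ContinuousOn d S := by
    have h1 : d = fun y => (1 / 2) * (b y) ^ 2 * ((1 - (rho y) ^ 2) * R + (rho y) ^ 2 + 1) :=
      funext hddef
    rw [h1]
    exact (continuousOn_const.mul (contb.pow 2)).mul
      ((((continuousOn_const.sub (controho.pow 2)).mul continuousOn_const).add
        (controho.pow 2)).add continuousOn_const)
  have contψ : ContinuousOn ψ S := by
    have h1 : ψ = fun y => 1 + ((1 / 2) * (b y) ^ 2 * e2 y + atld y * e1 y) / (η y) ^ 2
        - d y * (e1 y) ^ 2 / (η y) ^ 3 := funext hψx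
    rw [h1]
    exact (continuousOn_const.add
      ((((continuousOn_const.mul (contb.pow 2)).mul conte2).add (contatld.mul conte1)).div
        (contη.pow 2) (fun x hx => pow_ne_zero 2 (hηneS x hx)))).sub
      ((contd.mul (conte1.pow 2)).div (contη.pow 3) (fun x hx => pow_ne_zero 3 (hηneS x hx)))
  have contw : ContinuousOn (fun y => φ y - ψ y) S := contφ.sub contψ
  -- MVT helpers
  have hIccS : ∀ {p q : ℝ}, y₀ < p → Icc p q ⊆ S := fun hp x hx => memS (le_trans hp.le hx.1)
  have mvt : ∀ p q, y₀ < p → p < q → ∃ c ∈ Ioo p q, φ1 c = (φ q - φ p) / (q - p) := by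
    intro p q hp hpq
    exact exists_hasDerivAt_eq_slope φ φ1 hpq (contφ.mono (hIccS hp))
      (fun x hx => hDφ x (hp.trans hx.1))
  have mvt1 : ∀ p q, y₀ < p → p < q → ∃ c ∈ Ioo p q, φ2 c = (φ1 q - φ1 p) / (q - p) := by
    intro p q hp hpq
    exact exists_hasDerivAt_eq_slope φ1 φ2 hpq (contφ1.mono (hIccS hp))
      (fun x hx => hDφ1 x (hp.trans hx.1))
  have hdivpos : ∀ X c : ℝ, 0 < c → 0 < X / c → 0 < X := by
    intro X c hc hX
    rcases div_pos_iff.mp hX with ⟨h1, _⟩ | ⟨_, h2⟩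
    · exact h1
    · linarith
  have hdivneg : ∀ X c : ℝ, 0 < c → X / c < 0 → X < 0 := by
    intro X c hc hX
    rcases div_neg_iff.mp hX with ⟨_, h2⟩ | ⟨h1, _⟩
    · linarith
    · exact h1
  -- push lemma
  have push : ∀ σ x₁, y₀ < σ → σ < x₁ → 0 ≤ φ1 σ → ψ σ < φ σ →
      (∀ s, σ < s → s ≤ x₁ → φ1 s < 0) → False := by
    intro σ x₁ hσ hσx hp hw hneg
    have h2 : 0 < φ2 σ := key σ hσ hw hp
    have hs := hDφ1 σ hσ
    rw [hasDerivAt_iff_tendsto_slope] at hs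
    have hmem2 : slope φ1 σ ⁻¹' (Ioi 0) ∈ 𝓝[≠] σ := hs (Ioi_mem_nhds h2)
    have hmem3 : slope φ1 σ ⁻¹' (Ioi 0) ∈ 𝓝[>] σ :=
      nhdsWithin_mono σ (fun y (hy : y ∈ Ioi σ) => ne_of_gt hy) hmem2
    have hmem4 : Ioo σ x₁ ∈ 𝓝[>] σ := Ioo_mem_nhdsGT hσx
    obtain ⟨y, hy1, hy2⟩ := Filter.nonempty_of_mem (Filter.inter_mem hmem3 hmem4)
    have hy3 : 0 < slope φ1 σ y := hy1
    rw [slope_def_field] at hy3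
    have hy4 : 0 < φ1 y - φ1 σ := hdivpos _ _ (by linarith [hy2.1] : (0:ℝ) < y - σ) hy3
    have := hneg y hy2.1 hy2.2.le
    linarith
  -- main argument
  by_contra hcon
  rw [Filter.not_eventually] at hcon
  have hwfreq : ∃ᶠ y in atTop, ψ y < φ y ∧ y₀ < y := by
    apply (hcon.and_eventually (eventually_gt_atTop y₀)).mono
    rintro y ⟨hy1, hy2⟩
    refine ⟨?_, hy2⟩
    have hη := hηpos y hy2.le
    rw [not_le] at hy1
    show ψ y < u y / η y
    rw [lt_div_iff₀ hη]
    linarith [hy1]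
  have hφle1 : ∀ᶠ y in atTop, φ y ≤ 1 := by
    filter_upwards [hule, eventually_ge_atTop y₀] with y h1 h2
    exact (div_le_one (hηpos y h2)).2 h1
  by_cases htail : ∀ᶠ y in atTop, ψ y < φ y
  · -- tail case : eventually w > 0
    obtain ⟨z, hz⟩ := (htail.and (eventually_gt_atTop y₀)).exists_forall_of_atTop
    obtain ⟨z₁, hz₁y₀, hz₁w⟩ : ∃ z₁, y₀ < z₁ ∧ ∀ y, z₁ ≤ y → ψ y < φ y :=
      ⟨max z (y₀ + 1), lt_of_lt_of_le (by linarith) (le_max_right _ _),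
        fun y hy => (hz y (le_trans (le_max_left _ _) hy)).1⟩
    by_cases hT : ∃ τ, z₁ < τ ∧ 0 ≤ φ1 τ
    · obtain ⟨τ, hτz, hτp⟩ := hT
      have hτ0 : y₀ < τ := lt_trans hz₁y₀ hτz
      have hwt : ∀ s, τ ≤ s → ψ s < φ s := fun s hs => hz₁w s (le_trans hτz.le hs)
      have hge : ∀ s, τ ≤ s → 0 ≤ φ1 s := by
        intro x₁ hx₁
        rcases eq_or_lt_of_le hx₁ with rfl | hlt
        · exact hτp
        by_contra hneg
        push_neg at hneg
        set B := Icc τ x₁ ∩ φ1 ⁻¹' (Ici 0) with hB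
        have hclosed : IsClosed B :=
          (contφ1.mono (hIccS hτ0)).preimage_isClosed_of_isClosed isClosed_Icc isClosed_Ici
        have hBne : B.Nonempty := ⟨τ, ⟨le_refl _, hlt.le⟩, hτp⟩
        have hbdd : BddAbove B := bddAbove_Icc.mono inter_subset_left
        set σ := sSup B with hσdef
        have hσB : σ ∈ B := hclosed.csSup_mem hBne hbdd
        have hσp : 0 ≤ φ1 σ := hσB.2
        have hσx : σ < x₁ := by
          rcases lt_or_eq_of_le hσB.1.2 with h | h
          · exact h
          · rw [h] at hσp; linarith
        have hneg' : ∀ s, σ < s → s ≤ x₁ → φ1 s < 0 := by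
          intro s hs1 hs2
          by_contra hge2
          push_neg at hge2
          have hsB : s ∈ B := ⟨⟨le_trans hσB.1.1 hs1.le, hs2⟩, hge2⟩
          exact absurd (le_csSup hbdd hsB) (not_le.2 hs1)
        exact push σ x₁ (lt_of_lt_of_le hτ0 hσB.1.1) hσx hσp (hwt σ hσB.1.1) hneg'
      have hφ2pos : ∀ s, τ ≤ s → 0 < φ2 s :=
        fun s hs => key s (lt_of_lt_of_le hτ0 hs) (hwt s hs) (hge s hs)
      have hc : 0 < φ1 (τ + 1) := by
        obtain ⟨ξ, hξ, hξeq⟩ := mvt1 τ (τ + 1) hτ0 (by linarith)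
        have h1 : 0 < φ2 ξ := hφ2pos ξ hξ.1.le
        rw [hξeq] at h1
        have h2 : 0 < φ1 (τ + 1) - φ1 τ :=
          hdivpos _ _ (by linarith : (0:ℝ) < τ + 1 - τ) h1
        linarith [hτp]
      have hgrow : ∀ x, τ + 1 < x → φ (τ + 1) + φ1 (τ + 1) * (x - (τ + 1)) < φ x := by
        intro x hx
        obtain ⟨ξ, hξ, hξeq⟩ := mvt (τ + 1) x (by linarith) hx
        have hξ1 : φ1 (τ + 1) < φ1 ξ := by
          obtain ⟨ζ, hζ, hζeq⟩ := mvt1 (τ + 1) ξ (by linarith) hξ.1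
          have h2 : 0 < φ2 ζ := hφ2pos ζ (by linarith [hζ.1])
          rw [hζeq] at h2
          have h3 : 0 < φ1 ξ - φ1 (τ + 1) :=
            hdivpos _ _ (by linarith [hξ.1] : (0:ℝ) < ξ - (τ + 1)) h2
          linarith
        have hxd : (0:ℝ) < x - (τ + 1) := by linarith
        have he : φ1 ξ * (x - (τ + 1)) = φ x - φ (τ + 1) := by
          rw [hξeq, div_mul_cancel₀ _ hxd.ne']
        nlinarith [mul_lt_mul_of_pos_right hξ1 hxd]
      have h2ev : ∀ᶠ y in atTop, φ y < 2 := hratio.eventually_lt_const (by norm_num)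
      obtain ⟨X, hX⟩ := h2ev.exists_forall_of_atTop
      obtain ⟨x, hx2, hx1, hx3⟩ :
          ∃ x', (τ + 1 < x') ∧ φ x' < 2 ∧
            (τ + 1) + (2 - φ (τ + 1)) / (φ1 (τ + 1)) + 1 ≤ x' := by
        refine ⟨max X (max (τ + 2) ((τ + 1) + (2 - φ (τ + 1)) / (φ1 (τ + 1)) + 1)),
          ?_, ?_, ?_⟩
        · exact lt_of_lt_of_le (by linarith) (le_trans (le_max_left _ _) (le_max_right _ _))
        · exact hX _ (le_max_left _ _)
        · exact le_trans (le_max_right _ _) (le_max_right _ _)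
      have h5 : (2 - φ (τ + 1)) / (φ1 (τ + 1)) ≤ x - (τ + 1) := by linarith
      have h6 : 2 - φ (τ + 1) ≤ (x - (τ + 1)) * φ1 (τ + 1) := (div_le_iff₀ hc).mp h5
      have hg := hgrow x hx2
      nlinarith [hg, hx1, h6]
    · push_neg at hT
      have anti : ∀ p q, z₁ ≤ p → p < q → φ q < φ p := by
        intro p q hp hpq
        obtain ⟨c, hcm, hceq⟩ := mvt p q (lt_of_lt_of_le hz₁y₀ hp) hpq
        have h1 : φ1 c < 0 := hT c (lt_of_le_of_lt hp hcm.1)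
        rw [hceq] at h1
        have h2 : φ q - φ p < 0 := hdivneg _ _ (by linarith : (0:ℝ) < q - p) h1
        linarith
      obtain ⟨y₁, hy₁1, hy₁2⟩ := (hφle1.and (eventually_ge_atTop z₁)).exists
      have h2 : φ (y₁ + 1) < φ y₁ := anti y₁ (y₁ + 1) hy₁2 (by linarith)
      have h3 : φ (y₁ + 1) < 1 := lt_of_lt_of_le h2 hy₁1
      obtain ⟨y₃, hy₃1, hy₃2⟩ := ((hratio.eventually_const_lt h3).and
        (eventually_ge_atTop (y₁ + 2))).exists
      have h4 := anti (y₁ + 1) y₃ (by linarith) (by linarith)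
      linarith
  · -- component case
    rw [Filter.not_eventually] at htail
    obtain ⟨s₁, hs₁1, hs₁2⟩ := (htail.and_eventually (eventually_gt_atTop y₀)).exists
    have hle_s₁ : φ s₁ ≤ ψ s₁ := not_lt.1 hs₁1
    obtain ⟨z, hz1, hz2⟩ := (hwfreq.and_eventually (eventually_gt_atTop s₁)).exists
    obtain ⟨t, ht1, ht2⟩ := (htail.and_eventually (eventually_gt_atTop z)).exists
    have hle_t : φ t ≤ ψ t := not_lt.1 ht1
    have hzw : ψ z < φ z := hz1.1
    have hy₀z : y₀ < z := hz1.2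
    -- α
    set Aα := Icc s₁ z ∩ (fun y => φ y - ψ y) ⁻¹' (Iic 0) with hAαdef
    have hclosedα : IsClosed Aα :=
      (contw.mono (hIccS hs₁2)).preimage_isClosed_of_isClosed isClosed_Icc isClosed_Iic
    have hAαne : Aα.Nonempty := ⟨s₁, ⟨le_refl _, hz2.le⟩, by
      simp only [mem_preimage, mem_Iic]; linarith⟩
    have hbddα : BddAbove Aα := bddAbove_Icc.mono inter_subset_left
    set α := sSup Aα with hαdef
    have hαA : α ∈ Aα := hclosedα.csSup_mem hAαne hbddα
    have hαw : φ α ≤ ψ α := by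
      have h := hαA.2
      simp only [mem_preimage, mem_Iic] at h
      linarith
    have hαz : α < z := by
      rcases lt_or_eq_of_le hαA.1.2 with h | h
      · exact h
      · rw [h] at hαw; linarith
    have hy₀α : y₀ < α := lt_of_lt_of_le hs₁2 hαA.1.1
    have hwαz : ∀ x, α < x → x ≤ z → ψ x < φ x := by
      intro x h1 h2
      by_contra hge
      have hxA : x ∈ Aα := ⟨⟨le_trans hαA.1.1 h1.le, h2⟩, by
        simp only [mem_preimage, mem_Iic]; linarith [not_lt.1 hge]⟩
      exact absurd (le_csSup hbddα hxA) (not_le.2 h1)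
    -- β
    set Aβ := Icc z t ∩ (fun y => φ y - ψ y) ⁻¹' (Iic 0) with hAβdef
    have hclosedβ : IsClosed Aβ :=
      (contw.mono (hIccS hy₀z)).preimage_isClosed_of_isClosed isClosed_Icc isClosed_Iic
    have hAβne : Aβ.Nonempty := ⟨t, ⟨ht2.le, le_refl _⟩, by
      simp only [mem_preimage, mem_Iic]; linarith⟩
    have hbddβ : BddBelow Aβ := bddBelow_Icc.mono inter_subset_left
    set β := sInf Aβ with hβdef
    have hβA : β ∈ Aβ := hclosedβ.csInf_mem hAβne hbddβ
    have hβw : φ β ≤ ψ β := by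
      have h := hβA.2
      simp only [mem_preimage, mem_Iic] at h
      linarith
    have hzβ : z < β := by
      rcases lt_or_eq_of_le hβA.1.1 with h | h
      · exact h
      · rw [← h] at hβw; linarith
    have hwzβ : ∀ x, z ≤ x → x < β → ψ x < φ x := by
      intro x h1 h2
      by_contra hge
      have hxA : x ∈ Aβ := ⟨⟨h1, le_trans h2.le hβA.1.2⟩, by
        simp only [mem_preimage, mem_Iic]; linarith [not_lt.1 hge]⟩
      exact absurd (csInf_le hbddβ hxA) (not_le.2 h2)
    have hαβ : α < β := lt_trans hαz hzβ
    have hy₀β : y₀ < β := lt_trans hy₀α hαβ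
    have hwmid : ∀ x, α < x → x < β → ψ x < φ x := by
      intro x h1 h2
      rcases le_or_gt x z with h | h
      · exact hwαz x h1 h
      · exact hwzβ x h.le h2
    have FactF : ∀ x, α < x → x < β → φ α < φ x := by
      intro x h1 h2
      have h3 := hwmid x h1 h2
      have h4 : ψ α ≤ ψ x := hΨmono (memS hy₀α.le) (memS (lt_trans hy₀α h1).le) h1.le
      linarith
    have Step1 : ∀ x, α < x → x < β → 0 ≤ φ1 x := by
      intro x₁ h1 h2
      by_contra hneg
      push_neg at hneg
      by_cases hA : ∃ s, α < s ∧ s ≤ x₁ ∧ 0 ≤ φ1 s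
      · obtain ⟨s0, hs01, hs02, hs03⟩ := hA
        set B := Icc α x₁ ∩ φ1 ⁻¹' (Ici 0) with hBdef
        have hclosed : IsClosed B :=
          (contφ1.mono (hIccS hy₀α)).preimage_isClosed_of_isClosed isClosed_Icc isClosed_Ici
        have hBne : B.Nonempty := ⟨s0, ⟨hs01.le, hs02⟩, hs03⟩
        have hbdd : BddAbove B := bddAbove_Icc.mono inter_subset_left
        set σ := sSup B with hσdef
        have hσB : σ ∈ B := hclosed.csSup_mem hBne hbdd
        have hσp : 0 ≤ φ1 σ := hσB.2
        have hσα : α < σ := lt_of_lt_of_le hs01 (le_csSup hbdd ⟨⟨hs01.le, hs02⟩, hs03⟩)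
        have hσx : σ < x₁ := by
          rcases lt_or_eq_of_le hσB.1.2 with h | h
          · exact h
          · rw [h] at hσp; linarith
        have hneg' : ∀ s, σ < s → s ≤ x₁ → φ1 s < 0 := by
          intro s hs1 hs2
          by_contra hge2
          push_neg at hge2
          have hsB : s ∈ B := ⟨⟨le_trans hσB.1.1 hs1.le, hs2⟩, hge2⟩
          exact absurd (le_csSup hbdd hsB) (not_le.2 hs1)
        exact push σ x₁ (lt_trans hy₀α hσα) hσx hσp
          (hwmid σ hσα (lt_trans hσx h2)) hneg'
      · push_neg at hA
        obtain ⟨c, hcm, hceq⟩ := mvt α x₁ hy₀α h1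
        have h5 : φ1 c < 0 := hA c hcm.1 hcm.2.le
        rw [hceq] at h5
        have h6 : φ x₁ - φ α < 0 := hdivneg _ _ (by linarith : (0:ℝ) < x₁ - α) h5
        have h7 := FactF x₁ h1 h2
        linarith
    have Step2 : ∀ x, α < x → x < β → 0 < φ2 x := fun x h1 h2 =>
      key x (lt_trans hy₀α h1) (hwmid x h1 h2) (Step1 x h1 h2)
    set m := (α + β) / 2 with hmdef
    have hαm : α < m := by rw [hmdef]; linarith
    have hmβ : m < β := by rw [hmdef]; linarith
    obtain ⟨c₁, hc₁, hc₁eq⟩ := mvt α m hy₀α hαm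
    obtain ⟨c₂, hc₂, hc₂eq⟩ := mvt m β (lt_trans hy₀α hαm) hmβ
    have hc₁c₂ : φ1 c₁ < φ1 c₂ := by
      obtain ⟨ξ, hξ, hξeq⟩ := mvt1 c₁ c₂ (lt_trans hy₀α hc₁.1) (lt_trans hc₁.2 hc₂.1)
      have h7 : 0 < φ2 ξ := Step2 ξ (lt_trans hc₁.1 hξ.1) (lt_trans hξ.2 hc₂.2)
      rw [hξeq] at h7
      have h8 : 0 < φ1 c₂ - φ1 c₁ :=
        hdivpos _ _ (by linarith [hξ.1, hξ.2] : (0:ℝ) < c₂ - c₁) h7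
      linarith
    have hconc := hΨconc.slope_anti_adjacent (memS hy₀α.le) (memS hy₀β.le) hαm hmβ
    have hwm : ψ m < φ m := hwmid m hαm hmβ
    have hdm : (0:ℝ) < m - α := by linarith
    have hdβ : (0:ℝ) < β - m := by linarith
    have e₁ : φ m - φ α = φ1 c₁ * (m - α) := by
      rw [hc₁eq, div_mul_cancel₀ _ hdm.ne']
    have e₂ : φ β - φ m = φ1 c₂ * (β - m) := by
      rw [hc₂eq, div_mul_cancel₀ _ hdβ.ne']
    have hconc' : (ψ β - ψ m) * (m - α) ≤ (ψ m - ψ α) * (β - m) := by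
      rw [div_le_div_iff₀ hdβ hdm] at hconc
      linarith
    have i' : ψ m - ψ α < φ1 c₁ * (m - α) := by linarith
    have ii' : φ1 c₂ * (β - m) < ψ β - ψ m := by linarith
    nlinarith [mul_lt_mul_of_pos_right i' hdβ, mul_lt_mul_of_pos_right ii' hdm,
      hconc', mul_lt_mul_of_pos_right hc₁c₂ (mul_pos hdm hdβ)]
end

section
/- Suppose E = (E₋, ∞) and let u be a positive solution of the HJB equation (1/2)b²u'' + ã u' + η u − u² − d (u')²/u = 0 on [y₀,∞) with u(y)/η(y) → 1 as y → ∞. Assume that on [y₀,∞): η > 0, Ψη ≤ 1, ã ≤ 0, and ā := ã/η + (b²−2d)η'/η² ≤ −C for some constant C > 0; assume further that Ψη is strictly increasing on [y₀,∞), and that η(y) → ∞, Ψη(y) → 1 and η'(y)/η(y) → 0 as y → ∞. Then u'(y)/u(y) → 0 as y → ∞. -/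
open Set Filter

lemma forward_invariant (q g : ℝ → ℝ) (Y ε : ℝ)
    (hq : ∀ y, Y ≤ y → HasDerivAt q (g y) y)
    (hkey : ∀ y, Y ≤ y → q y ≤ -ε → g y < 0)
    (y₁ : ℝ) (hy₁ : Y ≤ y₁) (h1 : q y₁ ≤ -ε) :
    ∀ y, y₁ ≤ y → q y ≤ -ε := by
  intro y₂ hy₂
  by_contra hcon
  push_neg at hcon
  set T : Set ℝ := {t | t ∈ Icc y₁ y₂ ∧ ∀ s ∈ Icc y₁ t, q s ≤ -ε} with hT
  have hne : y₁ ∈ T := ⟨⟨le_refl _, hy₂⟩, fun s hs => by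
    have : s = y₁ := le_antisymm hs.2 hs.1
    rwa [this]⟩
  have hbdd : BddAbove T := ⟨y₂, fun t ht => ht.1.2⟩
  set t₀ := sSup T with ht₀
  have ht₀mem : y₁ ≤ t₀ := le_csSup hbdd hne
  have ht₀le : t₀ ≤ y₂ := csSup_le ⟨y₁, hne⟩ (fun t ht => ht.1.2)
  have hall : ∀ s, y₁ ≤ s → s < t₀ → q s ≤ -ε := by
    intro s hs hst
    obtain ⟨t, htT, hst'⟩ := exists_lt_of_lt_csSup ⟨y₁, hne⟩ hst
    exact htT.2 s ⟨hs, le_of_lt hst'⟩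
  have hqt₀ : q t₀ ≤ -ε := by
    rcases eq_or_lt_of_le ht₀mem with h | h
    · rw [← h]; exact h1
    · have hc : ContinuousAt q t₀ := (hq t₀ (le_trans hy₁ ht₀mem)).continuousAt
      have hten : Tendsto q (nhdsWithin t₀ (Iio t₀)) (nhds (q t₀)) :=
        hc.continuousWithinAt.tendsto
      refine le_of_tendsto hten ?_
      filter_upwards [Ioo_mem_nhdsLT_of_mem ⟨h, le_refl t₀⟩] with s hs
      exact hall s (le_of_lt hs.1) hs.2
  have ht₀lt : t₀ < y₂ := by
    rcases lt_or_eq_of_le ht₀le with h | h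
    · exact h
    · exfalso; rw [h] at hqt₀; linarith
  have hg : g t₀ < 0 := hkey t₀ (le_trans hy₁ ht₀mem) hqt₀
  have hslope : Tendsto (slope q t₀) (nhdsWithin t₀ {t₀}ᶜ) (nhds (g t₀)) :=
    hasDerivAt_iff_tendsto_slope.1 (hq t₀ (le_trans hy₁ ht₀mem))
  have hmono : nhdsWithin t₀ (Ioi t₀) ≤ nhdsWithin t₀ {t₀}ᶜ :=
    nhdsWithin_mono _ (fun s hs => ne_of_gt hs)
  have hev : ∀ᶠ s in nhdsWithin t₀ (Ioi t₀), slope q t₀ s < 0 :=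
    (hslope.mono_left hmono).eventually_lt_const hg
  rw [eventually_iff, mem_nhdsGT_iff_exists_Ioo_subset] at hev
  obtain ⟨a, ha, hsub⟩ := hev
  have hamem : t₀ < a := ha
  set t₁ := min a y₂ with ht₁
  have ht₀t₁ : t₀ < t₁ := lt_min hamem ht₀lt
  set t' := (t₀ + t₁)/2 with ht'
  have h1' : t₀ < t' := by simp only [ht']; linarith
  have h2' : t' < t₁ := by simp only [ht']; linarith
  have ht'T : t' ∈ T := by
    constructor
    · exact ⟨le_trans ht₀mem (le_of_lt h1'),
        le_trans (le_of_lt h2') (min_le_right _ _)⟩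
    · intro s hs
      rcases le_or_gt s t₀ with h | h
      · rcases lt_or_eq_of_le h with h' | h'
        · exact hall s hs.1 h'
        · rw [h']; exact hqt₀
      · have hmem : s ∈ Ioo t₀ a :=
          ⟨h, lt_of_le_of_lt hs.2 (lt_of_lt_of_le h2' (min_le_left _ _))⟩
        have hsl := hsub hmem
        simp only [mem_setOf_eq, slope_def_field] at hsl
        have hspos : (0:ℝ) < s - t₀ := by linarith [hmem.1]
        have : q s - q t₀ < 0 := by
          by_contra hcc
          push_neg at hcc
          have : 0 ≤ (q s - q t₀) / (s - t₀) := div_nonneg hcc (le_of_lt hspos)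
          linarith
        linarith
  have : t' ≤ t₀ := le_csSup hbdd ht'T
  linarith

lemma inv_aux (z q g : ℝ → ℝ) (Y ε L : ℝ) (hε : 0 < ε)
    (hz : ∀ y, Y ≤ y → HasDerivAt z (q y) y)
    (hq : ∀ y, Y ≤ y → HasDerivAt q (g y) y)
    (hkey : ∀ y, Y ≤ y → q y ≤ -ε → g y < 0)
    (hzlim : Tendsto z atTop (nhds L)) :
    ∀ y, Y ≤ y → -ε < q y := by
  intro y₁ hy₁
  by_contra hcon
  push_neg at hcon
  have hinv := forward_invariant q g Y ε hq hkey y₁ hy₁ hcon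
  have hanti : AntitoneOn (fun y => z y + ε * y) (Ici y₁) := by
    apply antitoneOn_of_deriv_nonpos (convex_Ici y₁)
    · intro x hx
      exact ((hz x (le_trans hy₁ hx)).add
        ((hasDerivAt_id x).const_mul ε)).continuousAt.continuousWithinAt
    · intro x hx
      rw [interior_Ici] at hx
      exact ((hz x (le_trans hy₁ (le_of_lt hx))).add
        ((hasDerivAt_id x).const_mul ε)).differentiableAt.differentiableWithinAt
    · intro x hx
      rw [interior_Ici] at hx
      have hd : HasDerivAt (fun y => z y + ε * y) (q x + ε * 1) x :=
        (hz x (le_trans hy₁ (le_of_lt hx))).add ((hasDerivAt_id x).const_mul ε)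
      rw [hd.deriv]
      have := hinv x (le_of_lt hx)
      linarith
  have hev : ∀ᶠ y in atTop, L - 1 ≤ z y :=
    hzlim.eventually (eventually_ge_nhds (by linarith))
  obtain ⟨y₂, hy₂a, hy₂b⟩ :=
    ((eventually_ge_atTop (max y₁ ((z y₁ + ε*y₁ - (L-1) + 1)/ε))).and hev).exists
  have hy₂1 : y₁ ≤ y₂ := le_trans (le_max_left _ _) hy₂a
  have hy₂2 : (z y₁ + ε*y₁ - (L-1) + 1)/ε ≤ y₂ := le_trans (le_max_right _ _) hy₂a
  have h3 := hanti (mem_Ici.2 (le_refl y₁)) (mem_Ici.2 hy₂1) hy₂1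
  simp only at h3
  have : z y₁ + ε*y₁ - (L-1) + 1 ≤ ε * y₂ := by
    rw [div_le_iff₀ hε] at hy₂2; linarith
  linarith

set_option maxHeartbeats 1000000 in
lemma key_lemma_p (bv ev dv atv H1v W1v W2v wv G0v κ C ε cp X : ℝ)
    (hb2 : 0 < bv^2) (he : 0 < ev) (hw : 0 < wv)
    (hstar : bv^2/(2*ev) * W2v + (atv/ev + (bv^2-2*dv)*H1v/ev^2) * W1v
      - dv/(wv*ev)*W1v^2 + wv*G0v = 0)
    (habar : atv/ev + (bv^2-2*dv)*H1v/ev^2 ≤ -C)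
    (hd : 2*dv ≤ κ*bv^2)
    (hC : 0 < C) (hε : 0 < ε) (hcp : 0 < cp) (hXc : cp ≤ X)
    (hW1 : W1v ≤ -ε*X)
    (hG : |G0v| ≤ C*ε*cp/4) (hwle : wv ≤ 2) :
    W2v - κ*W1v^2/wv < 0 := by
  have hA : 0 < bv^2/(2*ev) := by positivity
  have hAT : bv^2/(2*ev) * (W2v - κ*W1v^2/wv)
      = -((atv/ev + (bv^2-2*dv)*H1v/ev^2))*W1v - wv*G0v
        + W1v^2/(wv*ev)*(dv - κ*bv^2/2) := by
    linear_combination hstar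
  have hX0 : 0 < X := lt_of_lt_of_le hcp hXc
  have hW10 : W1v ≤ 0 := le_trans hW1 (by nlinarith)
  have t1 : -((atv/ev + (bv^2-2*dv)*H1v/ev^2))*W1v ≤ C*W1v := by
    nlinarith [mul_nonneg (by linarith : (0:ℝ) ≤ -C - (atv/ev + (bv^2-2*dv)*H1v/ev^2))
      (by linarith : (0:ℝ) ≤ -W1v)]
  have t2 : C*W1v ≤ -(C*ε*cp) := by
    nlinarith [mul_le_mul_of_nonneg_left hW1 hC.le,
      mul_le_mul_of_nonneg_left hXc (mul_pos hC hε).le]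
  have t3 : -(wv*G0v) ≤ C*ε*cp/2 := by
    have habs : -G0v ≤ C*ε*cp/4 := by
      have h := abs_le.1 hG; linarith [h.1]
    have h1 : wv * (-G0v) ≤ wv * (C*ε*cp/4) := mul_le_mul_of_nonneg_left habs hw.le
    have h2 : wv * (C*ε*cp/4) ≤ 2 * (C*ε*cp/4) :=
      mul_le_mul_of_nonneg_right hwle (by positivity)
    nlinarith [h1, h2]
  have t4 : W1v^2/(wv*ev)*(dv - κ*bv^2/2) ≤ 0 := by
    apply mul_nonpos_of_nonneg_of_nonpos
    · positivity
    · linarith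
  have hlt : bv^2/(2*ev) * (W2v - κ*W1v^2/wv) < 0 := by
    rw [hAT]
    nlinarith [mul_pos (mul_pos hC hε) hcp]
  by_contra hcon
  push_neg at hcon
  nlinarith [mul_nonneg hA.le hcon]

set_option maxHeartbeats 1000000 in
lemma key_lemma_m (bv ev dv atv H1v W1v W2v wv G0v κ C ε cp X : ℝ)
    (hb2 : 0 < bv^2) (he : 0 < ev) (hw : 0 < wv)
    (hstar : bv^2/(2*ev) * W2v + (atv/ev + (bv^2-2*dv)*H1v/ev^2) * W1v
      - dv/(wv*ev)*W1v^2 + wv*G0v = 0)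
    (habar : atv/ev + (bv^2-2*dv)*H1v/ev^2 ≤ -C)
    (hd : κ*bv^2 ≤ 2*dv)
    (hC : 0 < C) (hε : 0 < ε) (hcp : 0 < cp) (hXc : cp ≤ X)
    (hW1 : ε*X ≤ W1v)
    (hG : |G0v| ≤ C*ε*cp/4) (hwle : wv ≤ 2) :
    0 < W2v - κ*W1v^2/wv := by
  have hA : 0 < bv^2/(2*ev) := by positivity
  have hAT : bv^2/(2*ev) * (W2v - κ*W1v^2/wv)
      = -((atv/ev + (bv^2-2*dv)*H1v/ev^2))*W1v - wv*G0v
        + W1v^2/(wv*ev)*(dv - κ*bv^2/2) := by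
    linear_combination hstar
  have hX0 : 0 < X := lt_of_lt_of_le hcp hXc
  have hW10 : 0 ≤ W1v := le_trans (by nlinarith) hW1
  have t1 : C*W1v ≤ -((atv/ev + (bv^2-2*dv)*H1v/ev^2))*W1v := by
    nlinarith [mul_nonneg (by linarith : (0:ℝ) ≤ -C - (atv/ev + (bv^2-2*dv)*H1v/ev^2)) hW10]
  have t2 : C*ε*cp ≤ C*W1v := by
    nlinarith [mul_le_mul_of_nonneg_left hW1 hC.le,
      mul_le_mul_of_nonneg_left hXc (mul_pos hC hε).le]
  have t3 : -(C*ε*cp/2) ≤ -(wv*G0v) := by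
    have habs : G0v ≤ C*ε*cp/4 := by
      have h := abs_le.1 hG; linarith [h.2]
    have h1 : wv * G0v ≤ wv * (C*ε*cp/4) := mul_le_mul_of_nonneg_left habs hw.le
    have h2 : wv * (C*ε*cp/4) ≤ 2 * (C*ε*cp/4) :=
      mul_le_mul_of_nonneg_right hwle (by positivity)
    nlinarith [h1, h2]
  have t4 : 0 ≤ W1v^2/(wv*ev)*(dv - κ*bv^2/2) := by
    apply mul_nonneg
    · positivity
    · linarith
  have hlt : 0 < bv^2/(2*ev) * (W2v - κ*W1v^2/wv) := by
    rw [hAT]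
    nlinarith [mul_pos (mul_pos hC hε) hcp]
  by_contra hcon
  push_neg at hcon
  nlinarith [mul_nonneg hA.le (by linarith : 0 ≤ -(W2v - κ*W1v^2/wv))]

lemma star_ratio (bb at2 dd uu U1v U2v ee H1v H2v : ℝ) (hu : uu ≠ 0) (he : ee ≠ 0) :
    bb^2/(2*ee) * (((U2v*ee - uu*H2v)*ee^2 - (U1v*ee - uu*H1v)*(2*ee*H1v))/ee^4)
      + (at2/ee + (bb^2-2*dd)*H1v/ee^2) * ((U1v*ee - uu*H1v)/ee^2)
      - dd/((uu/ee)*ee)*((U1v*ee - uu*H1v)/ee^2)^2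
      + (uu/ee)*((1 + ((1/2)*bb^2*H2v + at2*H1v)/ee^2 - dd*H1v^2/ee^3 - 1) + (1 - uu/ee))
    = ((1/2)*bb^2*U2v + at2*U1v + ee*uu - uu^2 - dd*U1v^2/uu)/ee^2 := by
  field_simp
  ring

lemma kappa_bounds (R s bb : ℝ) (hR : 0 < R) (hs1 : s^2 ≤ 1) :
    min (R+1) 2 * bb^2 ≤ 2*((1/2)*bb^2*((1-s^2)*R + s^2 + 1)) ∧
    2*((1/2)*bb^2*((1-s^2)*R + s^2 + 1)) ≤ max (R+1) 2 * bb^2 := by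
  have hs0 : 0 ≤ s^2 := sq_nonneg _
  have hb2 : 0 ≤ bb^2 := sq_nonneg _
  rcases le_total R 1 with hRle | hRle
  · have hmin : min (R+1) 2 = R+1 := min_eq_left (by linarith)
    have hmax : max (R+1) 2 = 2 := max_eq_right (by linarith)
    rw [hmin, hmax]
    constructor
    · nlinarith [mul_nonneg (mul_nonneg hs0 (by linarith : (0:ℝ) ≤ 1 - R)) hb2]
    · nlinarith [mul_nonneg (mul_nonneg (by linarith : (0:ℝ) ≤ 1 - s^2)
        (by linarith : (0:ℝ) ≤ 1 - R)) hb2]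
  · have hmin : min (R+1) 2 = 2 := min_eq_right (by linarith)
    have hmax : max (R+1) 2 = R+1 := max_eq_left (by linarith)
    rw [hmin, hmax]
    constructor
    · nlinarith [mul_nonneg (mul_nonneg (by linarith : (0:ℝ) ≤ 1 - s^2)
        (by linarith : (0:ℝ) ≤ R - 1)) hb2]
    · nlinarith [mul_nonneg (mul_nonneg hs0 (by linarith : (0:ℝ) ≤ R - 1)) hb2]

set_option maxHeartbeats 1000000 in
/-- strong mean reversion.  If `u/η → 1`, `η > 0`, `Ψη ≤ 1`, `ã ≤ 0` and
`ā ≤ -C < 0` on `[y₀,∞)`, `Ψη` is strictly increasing there, `η → ∞`, `Ψη → 1` and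
`η'/η → 0`, then `u'/u → 0` at `∞`. -/
theorem statement18
    (E : Set ℝ) (hE : E = Set.univ ∨ ∃ c : ℝ, E = Set.Ioi c)
    (R : ℝ) (hR : 0 < R) (hR1 : R ≠ 1)
    (r lam sigma a b rho delta : ℝ → ℝ)
    (hrlip : LocallyLipschitzOn E r) (hlamlip : LocallyLipschitzOn E lam)
    (hsigmalip : LocallyLipschitzOn E sigma) (halip : LocallyLipschitzOn E a)
    (hblip : LocallyLipschitzOn E b) (hrholip : LocallyLipschitzOn E rho)
    (hdeltalip : LocallyLipschitzOn E delta)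
    (hbne : ∀ y ∈ E, b y ≠ 0) (hsigmapos : ∀ y ∈ E, 0 < sigma y)
    (hrho : ∀ y ∈ E, rho y ∈ Icc (-1 : ℝ) 1)
    (η atld d : ℝ → ℝ)
    (hηdef : ∀ y, η y = (1 / R) * (delta y - (1 - R) * (r y + (lam y) ^ 2 / (2 * R))))
    (hatlddef : ∀ y, atld y = a y + ((1 - R) / R) * rho y * lam y * b y)
    (hddef : ∀ y, d y = (1 / 2) * (b y) ^ 2 * ((1 - (rho y) ^ 2) * R + (rho y) ^ 2 + 1))
    (y₀ : ℝ) (hy₀ : y₀ ∈ E)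
    (u : ℝ → ℝ) (huC2 : ContDiffOn ℝ 2 u (Ici y₀))
    (hupos : ∀ y ∈ Ici y₀, 0 < u y)
    (hHJB : ∀ y ∈ Ici y₀,
      (1 / 2) * (b y) ^ 2 * derivWithin (derivWithin u (Ici y₀)) (Ici y₀) y
        + atld y * derivWithin u (Ici y₀) y + η y * u y - (u y) ^ 2
        - d y * (derivWithin u (Ici y₀) y) ^ 2 / u y = 0)
    (hratio : Filter.Tendsto (fun y => u y / η y) Filter.atTop (nhds 1))
    (hηC2 : ContDiffOn ℝ 2 η (Ici y₀))
    (hηpos : ∀ y ∈ Ici y₀, 0 < η y)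
    (hΨle : ∀ y ∈ Ici y₀, PsiW b atld d (Ici y₀) η y ≤ 1)
    (hatldle : ∀ y ∈ Ici y₀, atld y ≤ 0)
    (C : ℝ) (hC : 0 < C)
    (habar : ∀ y ∈ Ici y₀,
      atld y / η y + ((b y) ^ 2 - 2 * d y) * derivWithin η (Ici y₀) y / (η y) ^ 2 ≤ -C)
    (hΨmono : StrictMonoOn (PsiW b atld d (Ici y₀) η) (Ici y₀))
    (hηinf : Filter.Tendsto η Filter.atTop Filter.atTop)
    (hΨlim : Filter.Tendsto (PsiW b atld d (Ici y₀) η) Filter.atTop (nhds 1))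
    (hη'η : Filter.Tendsto (fun y => derivWithin η (Ici y₀) y / η y)
      Filter.atTop (nhds 0)) :
    Filter.Tendsto (fun y => derivWithin u (Ici y₀) y / u y) Filter.atTop (nhds 0) := by
  have hUD : UniqueDiffOn ℝ (Ici y₀) := uniqueDiffOn_Ici y₀
  have hSE : Ici y₀ ⊆ E := by
    rcases hE with h | ⟨c, h⟩
    · rw [h]; exact subset_univ _
    · rw [h] at hy₀ ⊢; exact fun y hy => mem_Ioi.2 (lt_of_lt_of_le (mem_Ioi.1 hy₀) (mem_Ici.1 hy))
  set U1 := derivWithin u (Ici y₀) with hU1def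
  set H1 := derivWithin η (Ici y₀) with hH1def
  set U2 := derivWithin U1 (Ici y₀) with hU2def
  set H2 := derivWithin H1 (Ici y₀) with hH2def
  -- basic derivative facts
  have hu1 : ∀ y, y₀ < y → HasDerivAt u (U1 y) y := by
    intro y hy
    exact ((huC2.differentiableOn (by norm_num) y (mem_Ici.2 hy.le)).hasDerivWithinAt).hasDerivAt
      (Ici_mem_nhds hy)
  have hη1 : ∀ y, y₀ < y → HasDerivAt η (H1 y) y := by
    intro y hy
    exact ((hηC2.differentiableOn (by norm_num) y (mem_Ici.2 hy.le)).hasDerivWithinAt).hasDerivAt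
      (Ici_mem_nhds hy)
  have hU1C1 : ContDiffOn ℝ 1 U1 (Ici y₀) := huC2.derivWithin hUD (by norm_num)
  have hH1C1 : ContDiffOn ℝ 1 H1 (Ici y₀) := hηC2.derivWithin hUD (by norm_num)
  have hu2 : ∀ y, y₀ < y → HasDerivAt U1 (U2 y) y := by
    intro y hy
    exact ((hU1C1.differentiableOn (by norm_num) y (mem_Ici.2 hy.le)).hasDerivWithinAt).hasDerivAt
      (Ici_mem_nhds hy)
  have hη2 : ∀ y, y₀ < y → HasDerivAt H1 (H2 y) y := by
    intro y hy
    exact ((hH1C1.differentiableOn (by norm_num) y (mem_Ici.2 hy.le)).hasDerivWithinAt).hasDerivAt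
      (Ici_mem_nhds hy)
  -- positivity
  have hηne : ∀ y, y₀ ≤ y → η y ≠ 0 := fun y hy => (hηpos y (mem_Ici.2 hy)).ne'
  have hune : ∀ y, y₀ ≤ y → u y ≠ 0 := fun y hy => (hupos y (mem_Ici.2 hy)).ne'
  set w : ℝ → ℝ := fun y => u y / η y with hwdef
  have hwpos : ∀ y, y₀ ≤ y → 0 < w y := fun y hy =>
    div_pos (hupos y (mem_Ici.2 hy)) (hηpos y (mem_Ici.2 hy))
  have hwlim : Tendsto w atTop (nhds 1) := hratio
  set G0 : ℝ → ℝ := fun y => (PsiW b atld d (Ici y₀) η y - 1) + (1 - w y) with hG0def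
  set W1 : ℝ → ℝ := fun y => (U1 y * η y - u y * H1 y) / (η y)^2 with hW1def
  set W2 : ℝ → ℝ := fun y =>
    ((U2 y * η y - u y * H2 y) * (η y)^2 - (U1 y * η y - u y * H1 y) * (2 * η y * H1 y))
      / (η y)^4 with hW2def
  have hw1 : ∀ y, y₀ < y → HasDerivAt w (W1 y) y := by
    intro y hy
    exact (hu1 y hy).div (hη1 y hy) (hηne y hy.le)
  have hw2 : ∀ y, y₀ < y → HasDerivAt W1 (W2 y) y := by
    intro y hy
    have hN : HasDerivAt (fun x => U1 x * η x - u x * H1 x)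
        (U2 y * η y + U1 y * H1 y - (U1 y * H1 y + u y * H2 y)) y :=
      ((hu2 y hy).mul (hη1 y hy)).sub ((hu1 y hy).mul (hη2 y hy))
    have hden : HasDerivAt (fun x => (η x)^2) ((2:ℕ) * (η y)^(2-1) * H1 y) y :=
      (hη1 y hy).pow 2
    have hd := hN.div hden (pow_ne_zero 2 (hηne y hy.le))
    have heq : (((U2 y * η y + U1 y * H1 y - (U1 y * H1 y + u y * H2 y)) * (η y)^2
        - (U1 y * η y - u y * H1 y) * ((2:ℕ) * (η y)^(2-1) * H1 y)) / ((η y)^2)^2) = W2 y := by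
      rw [hW2def]
      have h0 := hηne y hy.le
      field_simp
      ring
    rw [heq] at hd
    exact hd
  -- the key identity
  have hstar : ∀ y, y₀ < y →
      b y^2/(2*η y) * W2 y + (atld y/η y + (b y^2 - 2*d y)*H1 y/(η y)^2) * W1 y
        - d y/(w y * η y)*(W1 y)^2 + w y * G0 y = 0 := by
    intro y hy
    have hHJ := hHJB y (mem_Ici.2 hy.le)
    have key := star_ratio (b y) (atld y) (d y) (u y) (U1 y) (U2 y) (η y) (H1 y) (H2 y)
      (hune y hy.le) (hηne y hy.le)
    simp only [hG0def, hwdef, hW1def, hW2def, PsiW, ← hH1def, ← hH2def]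
    linear_combination key + (1/(η y)^2) * hHJ
  -- the exponents
  set κp : ℝ := max (R+1) 2 with hκpdef
  set κm : ℝ := min (R+1) 2 with hκmdef
  have hκp2 : (2:ℝ) ≤ κp := le_max_right _ _
  have hκp1 : (1:ℝ) < κp := lt_of_lt_of_le one_lt_two hκp2
  have hκm1 : (1:ℝ) < κm := lt_min (by linarith) one_lt_two
  have hκmp : κm ≤ κp := le_trans (min_le_right _ _) hκp2
  have hκd : ∀ y, y₀ ≤ y → κm * (b y)^2 ≤ 2 * d y ∧ 2 * d y ≤ κp * (b y)^2 := by
    intro y hy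
    have hrh := hrho y (hSE (mem_Ici.2 hy))
    have hs1 : (rho y)^2 ≤ 1 := by nlinarith [hrh.1, hrh.2]
    have h := kappa_bounds R (rho y) (b y) hR hs1
    rw [hddef y, hκpdef, hκmdef]
    exact h
  -- z layer derivatives
  have hzder : ∀ (k : ℝ), k ≠ 1 → ∀ y, y₀ < y →
      HasDerivAt (fun x => (w x)^((1:ℝ)-k)/(1-k)) ((w y)^(-k) * W1 y) y := by
    intro k hk y hy
    have h := ((hw1 y hy).rpow_const (p := (1:ℝ)-k) (Or.inl (hwpos y hy.le).ne')).div_const (1-k)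
    have heq : W1 y * ((1:ℝ)-k) * w y ^ ((1:ℝ)-k-1) / (1-k) = (w y)^(-k) * W1 y := by
      rw [show (1:ℝ)-k-1 = -k by ring]
      have hk0 : (1:ℝ) - k ≠ 0 := sub_ne_zero.2 (Ne.symm hk)
      field_simp
    rw [heq] at h
    exact h
  have hqder : ∀ (k : ℝ), ∀ y, y₀ < y →
      HasDerivAt (fun x => (w x)^(-k) * W1 x)
        ((w y)^(-k) * (W2 y - k * (W1 y)^2 / w y)) y := by
    intro k y hy
    have h1 := (hw1 y hy).rpow_const (p := -k) (Or.inl (hwpos y hy.le).ne')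
    have h := h1.mul (hw2 y hy)
    have heq : W1 y * -k * w y ^ (-k-1) * W1 y + (w y)^(-k) * W2 y
        = (w y)^(-k) * (W2 y - k * (W1 y)^2 / w y) := by
      rw [show -k-1 = -k - 1 from rfl, Real.rpow_sub_one (hwpos y hy.le).ne']
      have hw0 := (hwpos y hy.le).ne'
      field_simp
      ring
    rw [heq] at h
    exact h
  -- limits of z
  have hzlim : ∀ k : ℝ, Tendsto (fun x => (w x)^((1:ℝ)-k)/(1-k)) atTop (nhds (1/(1-k))) := by
    intro k
    have hc : ContinuousAt (fun t : ℝ => t ^ ((1:ℝ)-k)) 1 :=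
      Real.continuousAt_rpow_const 1 _ (Or.inl one_ne_zero)
    have h2 : Tendsto (fun x => (w x)^((1:ℝ)-k)) atTop (nhds ((1:ℝ)^((1:ℝ)-k))) :=
      hc.tendsto.comp hwlim
    rw [Real.one_rpow] at h2
    exact h2.div_const (1-k)
  have hG0lim : Tendsto G0 atTop (nhds 0) := by
    have h1 := hΨlim.sub_const 1
    have h2 := (tendsto_const_nhds : Tendsto (fun _ : ℝ => (1:ℝ)) atTop (nhds 1)).sub hwlim
    have h3 := h1.add h2
    rw [hG0def]
    simpa using h3
  -- main step : W1 → 0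
  have HW1 : Tendsto W1 atTop (nhds 0) := by
    rw [Metric.tendsto_atTop]
    intro ε' hε'
    set tp : ℝ := (2:ℝ)^κp with htpdef
    have htp1 : (1:ℝ) ≤ tp := Real.one_le_rpow one_le_two (by linarith)
    set ε := ε' / tp with hεdef
    have hε : 0 < ε := div_pos hε' (by linarith)
    set cp : ℝ := ((1/2:ℝ))^κp with hcpdef
    have hcp0 : 0 < cp := Real.rpow_pos_of_pos (by norm_num) _
    have hGsmall : ∀ᶠ y in atTop, |G0 y| ≤ C*ε*cp/4 := by
      have hpos : (0:ℝ) < C*ε*cp/4 := by positivity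
      filter_upwards [Metric.tendsto_nhds.1 hG0lim _ hpos] with y hy
      rw [Real.dist_eq, sub_zero] at hy
      exact hy.le
    have hevAll : ∀ᶠ y in atTop,
        y₀ < y ∧ ((1/2:ℝ) ≤ w y ∧ w y ≤ 2) ∧ |G0 y| ≤ C*ε*cp/4 := by
      filter_upwards [eventually_gt_atTop y₀,
        hwlim.eventually (eventually_ge_nhds (by norm_num : (1/2:ℝ) < 1)),
        hwlim.eventually (eventually_le_nhds (by norm_num : (1:ℝ) < 2)),
        hGsmall] with y h1 h2 h3 h4
      exact ⟨h1, ⟨h2, h3⟩, h4⟩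
    obtain ⟨Y, hY⟩ := eventually_atTop.1 hevAll
    -- case κp : lower bound for W1
    have hkeyp : ∀ y, Y ≤ y → (w y)^(-κp) * W1 y ≤ -ε →
        (w y)^(-κp) * (W2 y - κp * (W1 y)^2 / w y) < 0 := by
      intro y hy hqle
      obtain ⟨hy0, ⟨hwl, hwu⟩, hG⟩ := hY y hy
      have hb0 : b y ≠ 0 := hbne y (hSE (mem_Ici.2 hy0.le))
      have hb2 : 0 < (b y)^2 := lt_of_le_of_ne (sq_nonneg _) (Ne.symm (pow_ne_zero 2 hb0))
      have hwp := hwpos y hy0.le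
      have hX0 : (0:ℝ) < w y ^ κp := Real.rpow_pos_of_pos hwp _
      have hXc : cp ≤ w y ^ κp := by
        rw [hcpdef]
        exact Real.rpow_le_rpow (by norm_num) hwl (by linarith)
      have hPX : (w y)^(-κp) * (w y)^κp = 1 := by
        rw [← Real.rpow_add hwp]; norm_num
      have hW1le : W1 y ≤ -ε * (w y ^ κp) := by
        have h := mul_le_mul_of_nonneg_left hqle hX0.le
        have h2 : (w y ^ κp) * ((w y)^(-κp) * W1 y) = W1 y := by
          rw [← mul_assoc, mul_comm (w y ^ κp) ((w y)^(-κp)), hPX, one_mul]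
        nlinarith [h, h2]
      have hT := key_lemma_p (b y) (η y) (d y) (atld y) (H1 y) (W1 y) (W2 y) (w y) (G0 y)
        κp C ε cp (w y ^ κp) hb2 (hηpos y (mem_Ici.2 hy0.le)) hwp (hstar y hy0)
        (habar y (mem_Ici.2 hy0.le)) (hκd y hy0.le).2 hC hε hcp0 hXc hW1le hG hwu
      exact mul_neg_of_pos_of_neg (Real.rpow_pos_of_pos hwp _) hT
    have hp := inv_aux (fun x => (w x)^((1:ℝ)-κp)/(1-κp)) (fun x => (w x)^(-κp) * W1 x)
      (fun x => (w x)^(-κp) * (W2 x - κp * (W1 x)^2 / w x)) Y ε (1/(1-κp)) hε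
      (fun y hy => hzder κp hκp1.ne' y (hY y hy).1)
      (fun y hy => hqder κp y (hY y hy).1)
      hkeyp (hzlim κp)
    -- case κm : upper bound for W1
    have hkeym : ∀ y, Y ≤ y → -((w y)^(-κm) * W1 y) ≤ -ε →
        -((w y)^(-κm) * (W2 y - κm * (W1 y)^2 / w y)) < 0 := by
      intro y hy hqle
      obtain ⟨hy0, ⟨hwl, hwu⟩, hG⟩ := hY y hy
      have hb0 : b y ≠ 0 := hbne y (hSE (mem_Ici.2 hy0.le))
      have hb2 : 0 < (b y)^2 := lt_of_le_of_ne (sq_nonneg _) (Ne.symm (pow_ne_zero 2 hb0))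
      have hwp := hwpos y hy0.le
      have hX0 : (0:ℝ) < w y ^ κm := Real.rpow_pos_of_pos hwp _
      have hXc : cp ≤ w y ^ κm := by
        rw [hcpdef]
        calc ((1/2:ℝ))^κp ≤ ((1/2:ℝ))^κm :=
              Real.rpow_le_rpow_of_exponent_ge (by norm_num) (by norm_num) hκmp
          _ ≤ w y ^ κm := Real.rpow_le_rpow (by norm_num) hwl (by linarith)
      have hPX : (w y)^(-κm) * (w y)^κm = 1 := by
        rw [← Real.rpow_add hwp]; norm_num
      have hW1ge : ε * (w y ^ κm) ≤ W1 y := by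
        have hqge : ε ≤ (w y)^(-κm) * W1 y := by linarith
        have h := mul_le_mul_of_nonneg_left hqge hX0.le
        have h2 : (w y ^ κm) * ((w y)^(-κm) * W1 y) = W1 y := by
          rw [← mul_assoc, mul_comm (w y ^ κm) ((w y)^(-κm)), hPX, one_mul]
        nlinarith [h, h2]
      have hT := key_lemma_m (b y) (η y) (d y) (atld y) (H1 y) (W1 y) (W2 y) (w y) (G0 y)
        κm C ε cp (w y ^ κm) hb2 (hηpos y (mem_Ici.2 hy0.le)) hwp (hstar y hy0)
        (habar y (mem_Ici.2 hy0.le)) (hκd y hy0.le).1 hC hε hcp0 hXc hW1ge hG hwu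
      have := mul_pos (Real.rpow_pos_of_pos hwp (-κm)) hT
      linarith
    have hm := inv_aux (fun x => -((w x)^((1:ℝ)-κm)/(1-κm))) (fun x => -((w x)^(-κm) * W1 x))
      (fun x => -((w x)^(-κm) * (W2 x - κm * (W1 x)^2 / w x))) Y ε (-(1/(1-κm))) hε
      (fun y hy => (hzder κm hκm1.ne' y (hY y hy).1).neg)
      (fun y hy => (hqder κm y (hY y hy).1).neg)
      hkeym ((hzlim κm).neg)
    -- conclusion
    refine ⟨Y, fun y hy => ?_⟩
    obtain ⟨hy0, ⟨hwl, hwu⟩, hG⟩ := hY y hy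
    have hwp := hwpos y hy0.le
    have hXp0 : (0:ℝ) < w y ^ κp := Real.rpow_pos_of_pos hwp _
    have hXm0 : (0:ℝ) < w y ^ κm := Real.rpow_pos_of_pos hwp _
    have hXptp : w y ^ κp ≤ tp := by
      rw [htpdef]
      exact Real.rpow_le_rpow hwp.le hwu (by linarith)
    have hXmtp : w y ^ κm ≤ tp := by
      rw [htpdef]
      calc w y ^ κm ≤ (2:ℝ) ^ κm := Real.rpow_le_rpow hwp.le hwu (by linarith)
        _ ≤ (2:ℝ) ^ κp := Real.rpow_le_rpow_of_exponent_le one_le_two hκmp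
    have hPXp : (w y)^(-κp) * (w y)^κp = 1 := by
      rw [← Real.rpow_add hwp]; norm_num
    have hPXm : (w y)^(-κm) * (w y)^κm = 1 := by
      rw [← Real.rpow_add hwp]; norm_num
    have hεtp : ε * tp = ε' := by
      rw [hεdef]
      field_simp
    have hlow : -ε' < W1 y := by
      have h : -ε < w y ^ (-κp) * W1 y := hp y hy
      have h1 := mul_lt_mul_of_pos_left h hXp0
      have h2 : (w y ^ κp) * ((w y)^(-κp) * W1 y) = W1 y := by
        rw [← mul_assoc, mul_comm (w y ^ κp) ((w y)^(-κp)), hPXp, one_mul]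
      nlinarith [h1, h2, mul_le_mul_of_nonneg_left hXptp hε.le]
    have hhigh : W1 y < ε' := by
      have h : -ε < -(w y ^ (-κm) * W1 y) := hm y hy
      have h' : (w y)^(-κm) * W1 y < ε := by linarith
      have h1 := mul_lt_mul_of_pos_left h' hXm0
      have h2 : (w y ^ κm) * ((w y)^(-κm) * W1 y) = W1 y := by
        rw [← mul_assoc, mul_comm (w y ^ κm) ((w y)^(-κm)), hPXm, one_mul]
      nlinarith [h1, h2, mul_le_mul_of_nonneg_left hXmtp hε.le]
    rw [Real.dist_eq, sub_zero]
    rw [abs_lt]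
    exact ⟨by linarith, hhigh⟩
  -- final assembly
  have hUW : ∀ᶠ y in atTop, U1 y / u y = W1 y / w y + H1 y / η y := by
    filter_upwards [eventually_gt_atTop y₀] with y hy
    have h1 := hu1 y hy
    have h3 := (hw1 y hy).mul (hη1 y hy)
    have h2 : HasDerivAt u (W1 y * η y + w y * H1 y) y := by
      apply h3.congr_of_eventuallyEq
      filter_upwards [Ioi_mem_nhds hy] with x hx
      simp only [hwdef]
      exact (div_mul_cancel₀ (u x) (hηne x (le_of_lt hx))).symm
    have huniq : U1 y = W1 y * η y + w y * H1 y := h1.unique h2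
    have huw : u y = w y * η y := by
      simp only [hwdef]
      exact (div_mul_cancel₀ (u y) (hηne y hy.le)).symm
    have hη0 := hηne y hy.le
    have hw0 := (hwpos y hy.le).ne'
    rw [huniq, huw]
    field_simp
  have hfin := (HW1.div hwlim one_ne_zero).add hη'η
  have hval : (0:ℝ)/1 + 0 = 0 := by norm_num
  rw [hval] at hfin
  exact Filter.Tendsto.congr' (Filter.EventuallyEq.symm hUW) hfin
end

section
/- In the Vasicek model, let u : (−∞, 0] → (0,∞) be a solution of the HJB equation (1/2)ν²u'' + ã u' + η u − u² − d (u')²/u = 0 on (−∞,0] such that q y + s ≤ log u(y) ≤ q̃ y + s̃ for all y ≤ 0, where q = (R−1)/(Rκ), 0 ≤ q̃ ≤ q and s, s̃ ∈ ℝ. Then q̃ ≤ liminf_{y→−∞} u'(y)/u(y) ≤ limsup_{y→−∞} u'(y)/u(y) ≤ q. -/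
open Set Filter

/-- If `f' < 0` whenever `f = c` (for `y ≤ y₀`), and `f y₀ > c`, then `f > c` on `(-∞, y₀]`. -/
lemma invariance_above {f g : ℝ → ℝ} {c y₀ : ℝ}
    (hf : ∀ y ≤ y₀, HasDerivAt f (g y) y)
    (hbd : ∀ y ≤ y₀, f y = c → g y < 0)
    (h0 : c < f y₀) : ∀ y ≤ y₀, c < f y := by
  intro y₁ hy₁
  by_contra hcon
  push_neg at hcon
  set S : Set ℝ := Icc y₁ y₀ ∩ f ⁻¹' (Iic c) with hS
  have hcont : ContinuousOn f (Icc y₁ y₀) := fun y hy =>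
    ((hf y hy.2).continuousAt).continuousWithinAt
  have hSclosed : IsClosed S :=
    hcont.preimage_isClosed_of_isClosed isClosed_Icc isClosed_Iic
  have hScomp : IsCompact S :=
    isCompact_Icc.of_isClosed_subset hSclosed inter_subset_left
  have hSne : S.Nonempty := ⟨y₁, ⟨le_refl _, hy₁⟩, hcon⟩
  set y₂ := sSup S with hy₂def
  have hy₂S : y₂ ∈ S := hScomp.sSup_mem hSne
  have hy₂le : y₂ ≤ y₀ := hy₂S.1.2
  have hy₂lt : y₂ < y₀ := lt_of_le_of_ne hy₂le (by
    intro h; exact absurd (h ▸ hy₂S.2 : f y₀ ≤ c) (not_le.2 h0))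
  have hbdd : BddAbove S := hScomp.bddAbove
  have hgt : ∀ y ∈ Ioc y₂ y₀, c < f y := by
    intro y hy
    by_contra h
    push_neg at h
    have : y ∈ S := ⟨⟨le_trans hy₂S.1.1 hy.1.le, hy.2⟩, h⟩
    exact absurd (le_csSup hbdd this) (not_le.2 hy.1)
  have hIoc : Ioc y₂ y₀ ∈ nhdsWithin y₂ (Ioi y₂) :=
    Ioc_mem_nhdsGT_of_mem ⟨le_refl _, hy₂lt⟩
  have hfy₂ : f y₂ = c := by
    have h1 : f y₂ ≤ c := hy₂S.2
    have h2 : c ≤ f y₂ := by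
      have ht : Tendsto f (nhdsWithin y₂ (Ioi y₂)) (nhds (f y₂)) :=
        ((hf y₂ hy₂le).continuousAt).continuousWithinAt
      refine ge_of_tendsto ht ?_
      filter_upwards [hIoc] with y hy
      exact (hgt y hy).le
    linarith
  have hneg : g y₂ < 0 := hbd y₂ hy₂le hfy₂
  have hslope : Tendsto (slope f y₂) (nhdsWithin y₂ (Ioi y₂)) (nhds (g y₂)) := by
    have := ((hf y₂ hy₂le).hasDerivWithinAt (s := Ioi y₂))
    rw [hasDerivWithinAt_iff_tendsto_slope] at this
    rwa [Set.diff_singleton_eq_self (by simp : y₂ ∉ Ioi y₂)] at this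
  have hnonneg : 0 ≤ g y₂ := by
    refine ge_of_tendsto hslope ?_
    filter_upwards [hIoc] with y hy
    have h1 : c < f y := hgt y hy
    have h2 : 0 < y - y₂ := sub_pos.2 hy.1
    have : 0 ≤ (f y - f y₂) / (y - y₂) := by
      apply div_nonneg _ h2.le
      rw [hfy₂]; linarith
    simpa [slope_def_field, div_eq_inv_mul] using this
  linarith

lemma invariance_below {f g : ℝ → ℝ} {c y₀ : ℝ}
    (hf : ∀ y ≤ y₀, HasDerivAt f (g y) y)
    (hbd : ∀ y ≤ y₀, f y = c → 0 < g y)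
    (h0 : f y₀ < c) : ∀ y ≤ y₀, f y < c := by
  have := invariance_above (f := fun y => -f y) (g := fun y => -g y) (c := -c) (y₀ := y₀)
    (fun y hy => (hf y hy).neg)
    (fun y hy h => by simpa using neg_lt_zero.2 (hbd y hy (by linarith [neg_eq_iff_eq_neg.1 h])))
    (by simpa using h0)
  intro y hy
  have := this y hy
  simpa using this

set_option maxHeartbeats 1600000 in
/-- asymptotics of the log-derivative of the optimal consumption rate in
the Vasicek model as `y → -∞`: if `q y + s ≤ log u(y) ≤ q̃ y + s̃` on `(-∞, 0]` with
`q = (R-1)/(Rκ)` and `0 ≤ q̃ ≤ q`, then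
`q̃ ≤ liminf_{y→-∞} u'/u ≤ limsup_{y→-∞} u'/u ≤ q`. -/
theorem statement19
    (R delta sigma nu kappa lam theta rho : ℝ)
    (hR : 1 < R) (hdelta : 0 < delta) (hsigma : 0 < sigma) (hnu : 0 < nu)
    (hkappa : 0 < kappa) (hrho : rho ∈ Icc (-1 : ℝ) 1)
    (η atld : ℝ → ℝ) (d q : ℝ)
    (hηdef : ∀ y, η y = (1 / R) * (delta - (1 - R) * (y + lam ^ 2 / (2 * R))))
    (hatlddef : ∀ y, atld y = -kappa * (y - theta) + ((1 - R) / R) * rho * lam * nu)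
    (hddef : d = (1 / 2) * nu ^ 2 * ((1 - rho ^ 2) * R + rho ^ 2 + 1))
    (hqdef : q = (R - 1) / (R * kappa))
    (hparam : (1 / 2) * nu ^ 2 * q <
      kappa * theta + ((1 - R) / R) * rho * lam * nu
        + (1 / (R * q)) * (delta - (1 - R) * lam ^ 2 / (2 * R))
        - (1 / 2) * nu ^ 2 * ((1 - rho ^ 2) * R + rho ^ 2) * q)
    (u : ℝ → ℝ) (huC2 : ContDiffOn ℝ 2 u (Iic 0))
    (hupos : ∀ y ∈ Iic (0 : ℝ), 0 < u y)
    (hHJB : ∀ y ∈ Iic (0 : ℝ),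
      (1 / 2) * nu ^ 2 * derivWithin (derivWithin u (Iic 0)) (Iic 0) y
        + atld y * derivWithin u (Iic 0) y + η y * u y - (u y) ^ 2
        - d * (derivWithin u (Iic 0) y) ^ 2 / u y = 0)
    (qt s st : ℝ) (hqt0 : 0 ≤ qt) (hqtq : qt ≤ q)
    (hlog : ∀ y ∈ Iic (0 : ℝ),
      q * y + s ≤ Real.log (u y) ∧ Real.log (u y) ≤ qt * y + st) :
    (qt : EReal) ≤
        Filter.liminf (fun y => ((derivWithin u (Iic 0) y / u y : ℝ) : EReal))
          Filter.atBot ∧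
      Filter.liminf (fun y => ((derivWithin u (Iic 0) y / u y : ℝ) : EReal))
          Filter.atBot ≤
        Filter.limsup (fun y => ((derivWithin u (Iic 0) y / u y : ℝ) : EReal))
          Filter.atBot ∧
      Filter.limsup (fun y => ((derivWithin u (Iic 0) y / u y : ℝ) : EReal))
          Filter.atBot ≤ (q : EReal) := by
  have hR0 : (0:ℝ) < R := lt_trans one_pos hR
  have hRne : R ≠ 0 := ne_of_gt hR0
  have hkne : kappa ≠ 0 := ne_of_gt hkappa
  have hq0 : 0 < q := by
    rw [hqdef]; exact div_pos (by linarith) (by positivity)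
  have hrho2 : rho ^ 2 ≤ 1 := by nlinarith [hrho.1, hrho.2]
  have hD : 0 ≤ d - nu ^ 2 / 2 := by
    rw [hddef]
    nlinarith [sq_nonneg nu,
      mul_nonneg (sq_nonneg nu) (mul_nonneg (sub_nonneg.2 hrho2) (by linarith : (0:ℝ) ≤ R - 1))]
  set u' := derivWithin u (Iic 0) with hu'def
  set u'' := derivWithin u' (Iic 0) with hu''def
  have hdiffu : DifferentiableOn ℝ u (Iic 0) := huC2.differentiableOn (by norm_num)
  have hdiffu' : DifferentiableOn ℝ u' (Iic 0) :=
    (huC2.derivWithin (m := 1) (uniqueDiffOn_Iic 0) (by norm_num)).differentiableOn one_ne_zero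
  have h1 : ∀ y : ℝ, y < 0 → HasDerivAt u (u' y) y := fun y hy =>
    ((hdiffu y hy.le).hasDerivWithinAt).hasDerivAt (Iic_mem_nhds hy)
  have h2 : ∀ y : ℝ, y < 0 → HasDerivAt u' (u'' y) y := fun y hy =>
    ((hdiffu' y hy.le).hasDerivWithinAt).hasDerivAt (Iic_mem_nhds hy)
  have h3 : ∀ y : ℝ, y < 0 → HasDerivAt (fun z => u' z / u z)
      ((u'' y * u y - u' y * u' y) / (u y) ^ 2) y := fun y hy =>
    (h2 y hy).div (h1 y hy) (ne_of_gt (hupos y hy.le))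
  have h4 : ∀ y : ℝ, y < 0 → HasDerivAt (fun z => Real.log (u z)) (u' y / u y) y := fun y hy =>
    (h1 y hy).log (ne_of_gt (hupos y hy.le))
  have hg : ∀ y : ℝ, y < 0 →
      (nu ^ 2 / 2) * ((u'' y * u y - u' y * u' y) / (u y) ^ 2)
        = u y + (d - nu ^ 2 / 2) * (u' y / u y) ^ 2 - atld y * (u' y / u y) - η y := by
    intro y hy
    have key := hHJB y hy.le
    have hne : u y ≠ 0 := ne_of_gt (hupos y hy.le)
    field_simp at key ⊢
    linear_combination key
  have hub : ∀ y : ℝ, y ≤ 0 → u y ≤ Real.exp st := by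
    intro y hy
    have h := (hlog y hy).2
    have heq : u y = Real.exp (Real.log (u y)) := (Real.exp_log (hupos y hy)).symm
    rw [heq]
    apply Real.exp_le_exp.2
    nlinarith [mul_nonpos_of_nonneg_of_nonpos hqt0 hy]
  -- upper bound on limsup
  have hupper : Filter.limsup (fun y => ((u' y / u y : ℝ) : EReal)) Filter.atBot ≤ (q : EReal) := by
    by_contra hcon
    push_neg at hcon
    obtain ⟨c, hc1, hc2⟩ := EReal.exists_between_coe_real hcon
    have hcq : q < c := by exact_mod_cast hc1
    have hfreq : ∃ᶠ y in atBot, c < u' y / u y := by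
      have := frequently_lt_of_lt_limsup (u := fun y => ((u' y / u y : ℝ) : EReal))
        (f := atBot) (b := (c : EReal)) isCobounded_le_of_bot hc2
      exact this.mono fun y hy => by exact_mod_cast hy
    obtain ⟨B, hB⟩ : ∃ B : ℝ, B = Real.exp st + (d - nu ^ 2 / 2) * c ^ 2
        + (-(kappa * theta + ((1 - R) / R) * rho * lam * nu) * c - delta / R
          + ((1 - R) / R) * (lam ^ 2 / (2 * R))) := ⟨_, rfl⟩
    have hAB : ∀ y : ℝ, Real.exp st + (d - nu ^ 2 / 2) * c ^ 2 - atld y * c - η y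
        = kappa * (c - q) * y + B := by
      intro y; rw [hatlddef, hηdef, hqdef, hB]; field_simp; ring
    have hA : 0 < kappa * (c - q) := mul_pos hkappa (by linarith)
    obtain ⟨T, hT⟩ : ∃ T : ℝ, T = min ((-B - 1) / (kappa * (c - q))) (-1 : ℝ) := ⟨_, rfl⟩
    have hT1 : T ≤ -1 := by rw [hT]; exact min_le_right _ _
    have hT2 : T ≤ (-B - 1) / (kappa * (c - q)) := by rw [hT]; exact min_le_left _ _
    have hsign : ∀ y : ℝ, y ≤ T → u' y / u y = c →
        (u'' y * u y - u' y * u' y) / (u y) ^ 2 < 0 := by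
      intro y hyT hfy
      have hy0 : y < 0 := lt_of_le_of_lt (le_trans hyT hT1) (by norm_num)
      have hlin : kappa * (c - q) * y + B ≤ -1 := by
        have hyT' : y ≤ (-B - 1) / (kappa * (c - q)) := le_trans hyT hT2
        have h := (le_div_iff₀ hA).1 hyT'
        linarith [mul_comm y (kappa * (c - q))]
      have hFneg : u y + (d - nu ^ 2 / 2) * (u' y / u y) ^ 2 - atld y * (u' y / u y) - η y < 0 := by
        have hub' := hub y hy0.le
        have hABy := hAB y
        rw [hfy]
        linarith
      by_contra hgy
      push_neg at hgy
      have hprod : 0 ≤ (nu ^ 2 / 2) * ((u'' y * u y - u' y * u' y) / (u y) ^ 2) :=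
        mul_nonneg (by positivity) hgy
      rw [hg y hy0] at hprod
      linarith
    obtain ⟨y₀, hy₀T, hy₀c⟩ := frequently_atBot.1 hfreq T
    have hy₀0 : y₀ < 0 := lt_of_le_of_lt (le_trans hy₀T hT1) (by norm_num)
    have hinv : ∀ y ≤ y₀, c < u' y / u y :=
      invariance_above (f := fun z => u' z / u z)
        (g := fun z => (u'' z * u z - u' z * u' z) / (u z) ^ 2)
        (fun y hy => h3 y (lt_of_le_of_lt hy hy₀0))
        (fun y hy hfy => hsign y (le_trans hy hy₀T) hfy) hy₀c
    obtain ⟨C, hC⟩ : ∃ C : ℝ, C = Real.log (u y₀) - c * y₀ := ⟨_, rfl⟩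
    obtain ⟨yb, hyb⟩ : ∃ yb : ℝ, yb = min (y₀ - 1) ((C - s) / (q - c) - 1) := ⟨_, rfl⟩
    have hyblt : yb < y₀ := by
      rw [hyb]; exact lt_of_le_of_lt (min_le_left _ _) (by linarith)
    have hyb0 : yb < 0 := lt_trans hyblt hy₀0
    have hcontw : ContinuousOn (fun z => Real.log (u z)) (Icc yb y₀) := fun x hx =>
      (h4 x (lt_of_le_of_lt hx.2 hy₀0)).continuousAt.continuousWithinAt
    obtain ⟨ξ, hξ, hslope⟩ := exists_hasDerivAt_eq_slope (fun z => Real.log (u z))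
      (fun z => u' z / u z) hyblt hcontw (fun x hx => h4 x (lt_trans hx.2 hy₀0))
    have hfξ : c < u' ξ / u ξ := hinv ξ hξ.2.le
    have hpos : 0 < y₀ - yb := by linarith
    have h2' : c * (y₀ - yb) < Real.log (u y₀) - Real.log (u yb) := by
      rw [hslope] at hfξ
      exact (lt_div_iff₀ hpos).1 hfξ
    have hlb := (hlog yb hyb0.le).1
    have hkey : (q - c) * yb < C - s := by rw [hC]; nlinarith [hlb, h2']
    have hyble : yb ≤ (C - s) / (q - c) - 1 := by rw [hyb]; exact min_le_right _ _
    have hqc : q - c < 0 := by linarith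
    have hge : (q - c) * ((C - s) / (q - c) - 1) ≤ (q - c) * yb :=
      mul_le_mul_of_nonpos_left hyble (le_of_lt hqc)
    have hne' : q - c ≠ 0 := ne_of_lt hqc
    have hexp : (q - c) * ((C - s) / (q - c) - 1) = (C - s) - (q - c) := by
      field_simp
    linarith
  -- lower bound on liminf
  have hlower : (qt : EReal) ≤ Filter.liminf (fun y => ((u' y / u y : ℝ) : EReal)) Filter.atBot := by
    by_contra hcon
    push_neg at hcon
    obtain ⟨c, hc1, hc2⟩ := EReal.exists_between_coe_real hcon
    have hcqt : c < qt := by exact_mod_cast hc2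
    have hcq : c < q := lt_of_lt_of_le hcqt hqtq
    have hfreq : ∃ᶠ y in atBot, u' y / u y < c := by
      have := frequently_lt_of_liminf_lt (u := fun y => ((u' y / u y : ℝ) : EReal))
        (f := atBot) (b := (c : EReal)) isCobounded_ge_of_top hc1
      exact this.mono fun y hy => by exact_mod_cast hy
    obtain ⟨B, hB⟩ : ∃ B : ℝ, B = -(kappa * theta + ((1 - R) / R) * rho * lam * nu) * c
          - delta / R + ((1 - R) / R) * (lam ^ 2 / (2 * R)) := ⟨_, rfl⟩
    have hAB : ∀ y : ℝ, -(atld y * c) - η y = kappa * (c - q) * y + B := by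
      intro y; rw [hatlddef, hηdef, hqdef, hB]; field_simp; ring
    have hA : kappa * (c - q) < 0 := mul_neg_of_pos_of_neg hkappa (by linarith)
    obtain ⟨T, hT⟩ : ∃ T : ℝ, T = min ((1 - B) / (kappa * (c - q))) (-1 : ℝ) := ⟨_, rfl⟩
    have hT1 : T ≤ -1 := by rw [hT]; exact min_le_right _ _
    have hT2 : T ≤ (1 - B) / (kappa * (c - q)) := by rw [hT]; exact min_le_left _ _
    have hsign : ∀ y : ℝ, y ≤ T → u' y / u y = c →
        0 < (u'' y * u y - u' y * u' y) / (u y) ^ 2 := by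
      intro y hyT hfy
      have hy0 : y < 0 := lt_of_le_of_lt (le_trans hyT hT1) (by norm_num)
      have hlin : 1 ≤ kappa * (c - q) * y + B := by
        have hyT' : y ≤ (1 - B) / (kappa * (c - q)) := le_trans hyT hT2
        have h := (le_div_iff_of_neg hA).1 hyT'
        linarith [mul_comm y (kappa * (c - q))]
      have hFpos : 0 < u y + (d - nu ^ 2 / 2) * (u' y / u y) ^ 2 - atld y * (u' y / u y) - η y := by
        have hupos' := hupos y hy0.le
        have hABy := hAB y
        have hdc : 0 ≤ (d - nu ^ 2 / 2) * c ^ 2 := mul_nonneg hD (sq_nonneg c)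
        rw [hfy]
        linarith
      by_contra hgy
      push_neg at hgy
      have hprod : (nu ^ 2 / 2) * ((u'' y * u y - u' y * u' y) / (u y) ^ 2) ≤ 0 :=
        mul_nonpos_of_nonneg_of_nonpos (by positivity) hgy
      rw [hg y hy0] at hprod
      linarith
    obtain ⟨y₀, hy₀T, hy₀c⟩ := frequently_atBot.1 hfreq T
    have hy₀0 : y₀ < 0 := lt_of_le_of_lt (le_trans hy₀T hT1) (by norm_num)
    have hinv : ∀ y ≤ y₀, u' y / u y < c :=
      invariance_below (f := fun z => u' z / u z)
        (g := fun z => (u'' z * u z - u' z * u' z) / (u z) ^ 2)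
        (fun y hy => h3 y (lt_of_le_of_lt hy hy₀0))
        (fun y hy hfy => hsign y (le_trans hy hy₀T) hfy) hy₀c
    obtain ⟨C, hC⟩ : ∃ C : ℝ, C = Real.log (u y₀) - c * y₀ := ⟨_, rfl⟩
    obtain ⟨yb, hyb⟩ : ∃ yb : ℝ, yb = min (y₀ - 1) ((st - C) / (c - qt) - 1) := ⟨_, rfl⟩
    have hyblt : yb < y₀ := by
      rw [hyb]; exact lt_of_le_of_lt (min_le_left _ _) (by linarith)
    have hyb0 : yb < 0 := lt_trans hyblt hy₀0
    have hcontw : ContinuousOn (fun z => Real.log (u z)) (Icc yb y₀) := fun x hx =>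
      (h4 x (lt_of_le_of_lt hx.2 hy₀0)).continuousAt.continuousWithinAt
    obtain ⟨ξ, hξ, hslope⟩ := exists_hasDerivAt_eq_slope (fun z => Real.log (u z))
      (fun z => u' z / u z) hyblt hcontw (fun x hx => h4 x (lt_trans hx.2 hy₀0))
    have hfξ : u' ξ / u ξ < c := hinv ξ hξ.2.le
    have hpos : 0 < y₀ - yb := by linarith
    have h2' : Real.log (u y₀) - Real.log (u yb) < c * (y₀ - yb) := by
      rw [hslope] at hfξ
      exact (div_lt_iff₀ hpos).1 hfξ
    have hub' := (hlog yb hyb0.le).2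
    have hkey : (c - qt) * yb < st - C := by rw [hC]; nlinarith [hub', h2']
    have hyble : yb ≤ (st - C) / (c - qt) - 1 := by rw [hyb]; exact min_le_right _ _
    have hcqt' : c - qt < 0 := by linarith
    have hge : (c - qt) * ((st - C) / (c - qt) - 1) ≤ (c - qt) * yb :=
      mul_le_mul_of_nonpos_left hyble (le_of_lt hcqt')
    have hne' : c - qt ≠ 0 := ne_of_lt hcqt'
    have hexp : (c - qt) * ((st - C) / (c - qt) - 1) = (st - C) - (c - qt) := by
      field_simp
    linarith
  exact ⟨hlower, liminf_le_limsup, hupper⟩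
end
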